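/- If a labeled sequent R, Γ has a derivation in G3Kt consisting solely of labeled polytree sequents, then the nested sequent 𝔑(R, Γ) is derivable in the deep nested calculus DKT. -/

import Mathlib

set_option autoImplicit false

/-! # Common definitions: tense logics, nested/labeled/display calculi
    (following Ciabattoni, Lyon, Ramanayake, Tiu,
     "Display to Labeled Proofs and Back Again for Tense Logics") -/

/-- Diamonds: `wd` = ◇ (white diamond), `bd` = ◆ (black diamond). -/
inductive Dmd : Type
  | wd
  | bd
deriving DecidableEq, Repr

/-- Tense formulae in negation normal form:
    `A ::= p | p̄ | A ∧ A | A ∨ A | □A | ◇A | ■A | ◆A`. -/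
inductive Formula : Type
  | pos : Nat → Formula      -- propositional variable p
  | neg : Nat → Formula      -- negated propositional variable p̄
  | and : Formula → Formula → Formula
  | or : Formula → Formula → Formula
  | box : Formula → Formula   -- □
  | dia : Formula → Formula   -- ◇
  | bbox : Formula → Formula  -- ■
  | bdia : Formula → Formula  -- ◆
deriving DecidableEq, Repr

/-- The De Morgan dual `Ā` of a formula `A`. -/
def Formula.dual : Formula → Formula
  | .pos p => .neg p
  | .neg p => .pos p
  | .and A B => .or A.dual B.dual
  | .or A B => .and A.dual B.dual
  | .box A => .dia A.dual
  | .dia A => .box A.dual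
  | .bbox A => .bdia A.dual
  | .bdia A => .bbox A.dual

/-- `A → B` is defined as `Ā ∨ B`. -/
def Formula.imp (A B : Formula) : Formula := A.dual.or B

/-- `A ↔ B` is defined as `(A → B) ∧ (B → A)`. -/
def Formula.iffF (A B : Formula) : Formula := (A.imp B).and (B.imp A)

/-- `⟨?⟩A` for a diamond `⟨?⟩ ∈ {◇, ◆}`. -/
def dmdF : Dmd → Formula → Formula
  | .wd, A => .dia A
  | .bd, A => .bdia A

/-- `⟨?⟩₁…⟨?⟩ₘ A` for a string of diamonds. -/
def applyDmds : List Dmd → Formula → Formula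
  | [], A => A
  | d :: ds, A => dmdF d (applyDmds ds A)

/-- A general path axiom `ΠA → ΣA`, given by the strings `Π` (ant) and `Σ` (suc). -/
structure GenPath : Type where
  ant : List Dmd
  suc : List Dmd

/-- A path axiom `ΠA → ⟨?⟩A`. -/
structure PathAx : Type where
  ant : List Dmd
  suc : Dmd
deriving DecidableEq

/-- Every path axiom is a general path axiom. -/
def pathToGen (F : PathAx) : GenPath := ⟨F.ant, [F.suc]⟩

/-- All instances `ΠA → ΣA` of the general path axioms in `GP`. -/
def gpInstances (GP : Set GenPath) : Set Formula :=
  {F | ∃ gp ∈ GP, ∃ A : Formula, F = (applyDmds gp.ant A).imp (applyDmds gp.suc A)}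

/-- The Hilbert system `Kt + S`: classical propositional axioms, modus ponens,
    the tense axioms, and necessitation for □ and ■, plus the axioms in `S`. -/
inductive KtProof (S : Set Formula) : Formula → Prop
  | ax {A : Formula} : A ∈ S → KtProof S A
  | pl1 (A B : Formula) : KtProof S (A.imp (B.imp A))
  | pl2 (A B : Formula) : KtProof S ((B.dual.imp A.dual).imp (A.imp B))
  | pl3 (A B C : Formula) :
      KtProof S ((A.imp (B.imp C)).imp ((A.imp B).imp (A.imp C)))
  | tense1 (A : Formula) : KtProof S (A.imp (Formula.box (Formula.bdia A)))
  | tense2 (A : Formula) : KtProof S (A.imp (Formula.bbox (Formula.dia A)))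
  | kbox (A B : Formula) :
      KtProof S ((Formula.box (A.imp B)).imp ((Formula.box A).imp (Formula.box B)))
  | kbbox (A B : Formula) :
      KtProof S ((Formula.bbox (A.imp B)).imp ((Formula.bbox A).imp (Formula.bbox B)))
  | boxdual (A : Formula) :
      KtProof S ((Formula.box A).iffF (Formula.dia A.dual).dual)
  | bboxdual (A : Formula) :
      KtProof S ((Formula.bbox A).iffF (Formula.bdia A.dual).dual)
  | mp {A B : Formula} : KtProof S (A.imp B) → KtProof S A → KtProof S B
  | necbox {A : Formula} : KtProof S A → KtProof S (Formula.box A)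
  | necbbox {A : Formula} : KtProof S A → KtProof S (Formula.bbox A)

/-! ## Nested sequents -/

/-- Nested sequents: `X ::= ε | A | X, X | ∘{X} | •{X}`. -/
inductive NSeq : Type
  | empty
  | fml : Formula → NSeq
  | comma : NSeq → NSeq → NSeq
  | white : NSeq → NSeq   -- ∘{X}
  | black : NSeq → NSeq   -- •{X}
deriving DecidableEq, Repr

/-- Comma is associative and commutative with unit ε: the induced congruence. -/
inductive NEquiv : NSeq → NSeq → Prop
  | refl (X : NSeq) : NEquiv X X
  | symm {X Y : NSeq} : NEquiv X Y → NEquiv Y X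
  | trans {X Y Z : NSeq} : NEquiv X Y → NEquiv Y Z → NEquiv X Z
  | comm (X Y : NSeq) : NEquiv (X.comma Y) (Y.comma X)
  | assoc (X Y Z : NSeq) : NEquiv ((X.comma Y).comma Z) (X.comma (Y.comma Z))
  | unit (X : NSeq) : NEquiv (X.comma NSeq.empty) X
  | commaCongr {X X' Y Y' : NSeq} :
      NEquiv X X' → NEquiv Y Y' → NEquiv (X.comma Y) (X'.comma Y')
  | whiteCongr {X Y : NSeq} : NEquiv X Y → NEquiv X.white Y.white
  | blackCongr {X Y : NSeq} : NEquiv X Y → NEquiv X.black Y.black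

/-- `★₁{… ★ₙ{Y} …}` where `★ⱼ = ∘` if `⟨?⟩ⱼ = ◇` and `★ⱼ = •` if `⟨?⟩ⱼ = ◆`. -/
def nestDmds : List Dmd → NSeq → NSeq
  | [], Y => Y
  | .wd :: ds, Y => (nestDmds ds Y).white
  | .bd :: ds, Y => (nestDmds ds Y).black

/-- The structural rules `NestSt(GP)` (premise, conclusion): for each
    `ΠA → ΣA ∈ GP`, from `X, ★Σ{Y}` infer `X, ★Π{Y}`. -/
def NestSt (GP : Set GenPath) : NSeq → NSeq → Prop :=
  fun prem concl => ∃ gp ∈ GP, ∃ X Y : NSeq,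
    prem = X.comma (nestDmds gp.suc Y) ∧ concl = X.comma (nestDmds gp.ant Y)

/-- The empty set of extension rules on nested sequents. -/
def NoNest : NSeq → NSeq → Prop := fun _ _ => False

/-- The shallow nested (display) calculus `SKT` extended with the
    structural rules `Ext` (relating premise to conclusion); nested sequents are
    treated up to the congruence `NEquiv` (comma is AC with unit ε). -/
inductive SKT (Ext : NSeq → NSeq → Prop) : NSeq → Prop
  | id (X : NSeq) (p : Nat) :
      SKT Ext ((X.comma (.fml (.pos p))).comma (.fml (.neg p)))
  | orR {X : NSeq} {A B : Formula} :
      SKT Ext (X.comma ((NSeq.fml A).comma (.fml B))) →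
      SKT Ext (X.comma (.fml (.or A B)))
  | andR {X : NSeq} {A B : Formula} :
      SKT Ext (X.comma (.fml A)) → SKT Ext (X.comma (.fml B)) →
      SKT Ext (X.comma (.fml (.and A B)))
  | ctr {X Y : NSeq} : SKT Ext (X.comma (Y.comma Y)) → SKT Ext (X.comma Y)
  | wk {X Y : NSeq} : SKT Ext X → SKT Ext (X.comma Y)
  | rf {X Y : NSeq} : SKT Ext (X.comma Y.white) → SKT Ext (X.black.comma Y)
  | rp {X Y : NSeq} : SKT Ext (X.comma Y.black) → SKT Ext (X.white.comma Y)
  | bbox {X : NSeq} {A : Formula} :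
      SKT Ext (X.comma (NSeq.fml A).black) → SKT Ext (X.comma (.fml (.bbox A)))
  | box {X : NSeq} {A : Formula} :
      SKT Ext (X.comma (NSeq.fml A).white) → SKT Ext (X.comma (.fml (.box A)))
  | bdia {X Y : NSeq} {A : Formula} :
      SKT Ext ((X.comma (Y.comma (.fml A)).black).comma (.fml (.bdia A))) →
      SKT Ext ((X.comma Y.black).comma (.fml (.bdia A)))
  | dia {X Y : NSeq} {A : Formula} :
      SKT Ext ((X.comma (Y.comma (.fml A)).white).comma (.fml (.dia A))) →
      SKT Ext ((X.comma Y.white).comma (.fml (.dia A)))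
  | ext {X Y : NSeq} : Ext X Y → SKT Ext X → SKT Ext Y
  | equiv {X Y : NSeq} : SKT Ext X → NEquiv X Y → SKT Ext Y

/-! ## Deep nested calculus -/

/-- One-hole contexts over nested sequents (up to `NEquiv` this suffices). -/
inductive Ctx : Type
  | hole
  | commaL : Ctx → NSeq → Ctx
  | white : Ctx → Ctx
  | black : Ctx → Ctx

/-- Filling the hole of a context with a nested sequent. -/
def Ctx.fill : Ctx → NSeq → NSeq
  | .hole, X => X
  | .commaL C Y, X => (C.fill X).comma Y
  | .white C, X => (C.fill X).white
  | .black C, X => (C.fill X).black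

/-- The deep nested calculus `DKT` extended with rules `Ext`
    (premise, conclusion); sequents are treated up to `NEquiv`. -/
inductive DKT (Ext : NSeq → NSeq → Prop) : NSeq → Prop
  | id (C : Ctx) (p : Nat) :
      DKT Ext (C.fill ((NSeq.fml (.pos p)).comma (.fml (.neg p))))
  | andD {C : Ctx} {Y : NSeq} {A B : Formula} :
      DKT Ext (C.fill ((NSeq.fml A).comma Y)) →
      DKT Ext (C.fill ((NSeq.fml B).comma Y)) →
      DKT Ext (C.fill ((NSeq.fml (.and A B)).comma Y))
  | orD {C : Ctx} {Y : NSeq} {A B : Formula} :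
      DKT Ext (C.fill ((NSeq.fml A).comma ((NSeq.fml B).comma Y))) →
      DKT Ext (C.fill ((NSeq.fml (.or A B)).comma Y))
  | bboxD {C : Ctx} {A : Formula} :
      DKT Ext (C.fill ((NSeq.fml (.bbox A)).comma (NSeq.fml A).black)) →
      DKT Ext (C.fill (.fml (.bbox A)))
  | boxD {C : Ctx} {A : Formula} :
      DKT Ext (C.fill ((NSeq.fml (.box A)).comma (NSeq.fml A).white)) →
      DKT Ext (C.fill (.fml (.box A)))
  | bdia1 {C : Ctx} {Y : NSeq} {A : Formula} :
      DKT Ext (C.fill ((Y.comma (.fml A)).black.comma (.fml (.bdia A)))) →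
      DKT Ext (C.fill (Y.black.comma (.fml (.bdia A))))
  | bdia2 {C : Ctx} {Y : NSeq} {A : Formula} :
      DKT Ext (C.fill ((Y.comma (.fml (.bdia A))).white.comma (.fml A))) →
      DKT Ext (C.fill ((Y.comma (.fml (.bdia A))).white))
  | dia1 {C : Ctx} {Y : NSeq} {A : Formula} :
      DKT Ext (C.fill ((Y.comma (.fml A)).white.comma (.fml (.dia A)))) →
      DKT Ext (C.fill (Y.white.comma (.fml (.dia A))))
  | dia2 {C : Ctx} {Y : NSeq} {A : Formula} :
      DKT Ext (C.fill ((Y.comma (.fml (.dia A))).black.comma (.fml A))) →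
      DKT Ext (C.fill ((Y.comma (.fml (.dia A))).black))
  | ext {X Y : NSeq} : Ext X Y → DKT Ext X → DKT Ext Y
  | equiv {X Y : NSeq} : DKT Ext X → NEquiv X Y → DKT Ext Y

/-! ## Display rules and display equivalence -/

/-- `DisplayDeriv X Z`: `Z` is derivable from `X` using only the display rules
    (rf) and (rp) (and rearrangement by the comma-congruence `NEquiv`). -/
inductive DisplayDeriv : NSeq → NSeq → Prop
  | refl (X : NSeq) : DisplayDeriv X X
  | equiv {X Y Z : NSeq} : NEquiv X Y → DisplayDeriv Y Z → DisplayDeriv X Z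
  | rf {X Y Z : NSeq} :
      DisplayDeriv (X.black.comma Y) Z → DisplayDeriv (X.comma Y.white) Z
  | rp {X Y Z : NSeq} :
      DisplayDeriv (X.white.comma Y) Z → DisplayDeriv (X.comma Y.black) Z

/-- Two nested sequents are display equivalent when each is derivable from the
    other using only the display rules. -/
def DisplayEquiv (X Y : NSeq) : Prop := DisplayDeriv X Y ∧ DisplayDeriv Y X

/-! ## Labeled sequents and the labeled calculus G3Kt -/

abbrev Label : Type := Nat

/-- A set of relational atoms `Rxy`. -/
abbrev RelSet : Type := Finset (Label × Label)

/-- A labeled sequent `R, Γ`. -/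
abbrev LSeq : Type := RelSet × Multiset (Label × Formula)

/-- The label `z` occurs in the labeled sequent `S`. -/
def occursLS (z : Label) (S : LSeq) : Prop :=
  (∃ w, (z, w) ∈ S.1 ∨ (w, z) ∈ S.1) ∨ ∃ A, (z, A) ∈ S.2

/-- `R_◇ x y := Rxy` and `R_◆ x y := Ryx`. -/
def relAtom : Dmd → Label → Label → Label × Label
  | .wd, x, y => (x, y)
  | .bd, x, y => (y, x)

/-- Relational atoms of a `Π`-chain through the list of labels `ls`. -/
def chainAtoms : List Dmd → List Label → List (Label × Label)
  | d :: ds, a :: b :: rest => relAtom d a b :: chainAtoms ds (b :: rest)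
  | _, _ => []

/-- `ls` is a chain of labels for the diamond string `ds` from `x` to `y`
    (an empty string forces `x = y`). -/
def IsChainList (ds : List Dmd) (x y : Label) (ls : List Label) : Prop :=
  ls.length = ds.length + 1 ∧ ls.head? = some x ∧ ls.getLast? = some y

/-- The structural rules `LabSt(GP)` (premise, conclusion): for `ΠA → ΣA ∈ GP`,
    from `R, R_Π x y, R_Σ x y, Γ` infer `R, R_Π x y, Γ`, where all labels in
    `R_Σ x y` other than `x, y` are eigenvariables. -/
def LabSt (GP : Set GenPath) : LSeq → LSeq → Prop :=
  fun prem concl => ∃ gp ∈ GP,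
    ∃ (R : RelSet) (Γ : Multiset (Label × Formula)) (x y : Label)
      (als sls : List Label),
      IsChainList gp.ant x y als ∧ IsChainList gp.suc x y sls ∧
      concl = (R ∪ (chainAtoms gp.ant als).toFinset, Γ) ∧
      prem = (R ∪ (chainAtoms gp.ant als).toFinset ∪
                (chainAtoms gp.suc sls).toFinset, Γ) ∧
      (∀ z ∈ sls, z ≠ x → z ≠ y → ¬ occursLS z concl)

/-- The empty set of extension rules on labeled sequents. -/
def NoExt : LSeq → LSeq → Prop := fun _ _ => False

/-- Derivations in the labeled calculus `G3Kt` extended with rules `Ext`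
    (relating premise to conclusion). -/
inductive G3KtD (Ext : LSeq → LSeq → Prop) :
    RelSet → Multiset (Label × Formula) → Type
  | id (R : RelSet) (Γ : Multiset (Label × Formula)) (x : Label) (p : Nat) :
      G3KtD Ext R ((x, .pos p) ::ₘ (x, .neg p) ::ₘ Γ)
  | orR (R : RelSet) (Γ : Multiset (Label × Formula)) (x : Label) (A B : Formula)
      (D : G3KtD Ext R ((x, A) ::ₘ (x, B) ::ₘ Γ)) :
      G3KtD Ext R ((x, .or A B) ::ₘ Γ)
  | andR (R : RelSet) (Γ : Multiset (Label × Formula)) (x : Label) (A B : Formula)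
      (D1 : G3KtD Ext R ((x, A) ::ₘ Γ)) (D2 : G3KtD Ext R ((x, B) ::ₘ Γ)) :
      G3KtD Ext R ((x, .and A B) ::ₘ Γ)
  | boxR (R : RelSet) (Γ : Multiset (Label × Formula)) (x y : Label) (A : Formula)
      (hy : ¬ occursLS y (R, (x, Formula.box A) ::ₘ Γ))
      (D : G3KtD Ext (insert (x, y) R) ((y, A) ::ₘ Γ)) :
      G3KtD Ext R ((x, .box A) ::ₘ Γ)
  | diaR (R : RelSet) (Γ : Multiset (Label × Formula)) (x y : Label) (A : Formula)
      (h : (x, y) ∈ R)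
      (D : G3KtD Ext R ((y, A) ::ₘ (x, Formula.dia A) ::ₘ Γ)) :
      G3KtD Ext R ((x, .dia A) ::ₘ Γ)
  | bboxR (R : RelSet) (Γ : Multiset (Label × Formula)) (x y : Label) (A : Formula)
      (hy : ¬ occursLS y (R, (x, Formula.bbox A) ::ₘ Γ))
      (D : G3KtD Ext (insert (y, x) R) ((y, A) ::ₘ Γ)) :
      G3KtD Ext R ((x, .bbox A) ::ₘ Γ)
  | bdiaR (R : RelSet) (Γ : Multiset (Label × Formula)) (x y : Label) (A : Formula)
      (h : (y, x) ∈ R)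
      (D : G3KtD Ext R ((y, A) ::ₘ (x, Formula.bdia A) ::ₘ Γ)) :
      G3KtD Ext R ((x, .bdia A) ::ₘ Γ)
  | ext (R' : RelSet) (Γ' : Multiset (Label × Formula))
      (R : RelSet) (Γ : Multiset (Label × Formula))
      (h : Ext (R', Γ') (R, Γ)) (D : G3KtD Ext R' Γ') : G3KtD Ext R Γ

/-- Derivability in `G3Kt + Ext`. -/
def G3KtDeriv (Ext : LSeq → LSeq → Prop) (R : RelSet)
    (Γ : Multiset (Label × Formula)) : Prop :=
  Nonempty (G3KtD Ext R Γ)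

/-- `Q` holds of every labeled sequent occurring in the derivation `D`
    (including the end sequent). -/
def G3KtD.allSeq {Ext : LSeq → LSeq → Prop} (Q : LSeq → Prop) :
    ∀ {R : RelSet} {Γ : Multiset (Label × Formula)}, G3KtD Ext R Γ → Prop
  | _, _, .id R Γ x p => Q (R, (x, .pos p) ::ₘ (x, .neg p) ::ₘ Γ)
  | _, _, .orR R Γ x A B D => Q (R, (x, .or A B) ::ₘ Γ) ∧ D.allSeq Q
  | _, _, .andR R Γ x A B D1 D2 =>
      Q (R, (x, .and A B) ::ₘ Γ) ∧ D1.allSeq Q ∧ D2.allSeq Q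
  | _, _, .boxR R Γ x _ A _ D => Q (R, (x, .box A) ::ₘ Γ) ∧ D.allSeq Q
  | _, _, .diaR R Γ x _ A _ D => Q (R, (x, .dia A) ::ₘ Γ) ∧ D.allSeq Q
  | _, _, .bboxR R Γ x _ A _ D => Q (R, (x, .bbox A) ::ₘ Γ) ∧ D.allSeq Q
  | _, _, .bdiaR R Γ x _ A _ D => Q (R, (x, .bdia A) ::ₘ Γ) ∧ D.allSeq Q
  | _, _, .ext _ _ R Γ _ D => Q (R, Γ) ∧ D.allSeq Q

/-! ## Paths, inverses, compositions, completion, propagation rules -/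

/-- The inverse of a diamond: `◇⁻¹ = ◆` and `◆⁻¹ = ◇`. -/
def Dmd.inv : Dmd → Dmd
  | .wd => .bd
  | .bd => .wd

/-- The inverse `I(F)` of a path axiom `F`. -/
def PathAx.inv (F : PathAx) : PathAx := ⟨(F.ant.map Dmd.inv).reverse, F.suc.inv⟩

/-- `I(P)`, the set of inverses of the path axioms in `P`. -/
def invSet (P : Set PathAx) : Set PathAx := {F | ∃ G ∈ P, F = G.inv}

/-- The completion `P*`: the smallest set of path axioms containing `P`,
    containing `◇A → ◇A` and `◆A → ◆A`, and closed under compositions. -/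
inductive Completion (P : Set PathAx) : PathAx → Prop
  | base {F : PathAx} : F ∈ P → Completion P F
  | wrefl : Completion P ⟨[Dmd.wd], Dmd.wd⟩
  | brefl : Completion P ⟨[Dmd.bd], Dmd.bd⟩
  | comp {F G : PathAx} (i : Nat) (hi : i < G.ant.length) :
      Completion P F → Completion P G → G.ant.get ⟨i, hi⟩ = F.suc →
      Completion P ⟨G.ant.take i ++ F.ant ++ G.ant.drop (i + 1), G.suc⟩

/-- `(P ∪ I(P))*`. -/
def PStar (P : Set PathAx) : PathAx → Prop := Completion (P ∪ invSet P)

/-- A path from `x` to `y` with the given string of diamonds in the propagation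
    graph determined by the edge set `E`: each `Rxy` contributes the labeled
    edges `(x, y, ◇)` and `(y, x, ◆)`. -/
inductive LPath (E : Finset (Label × Label)) : Label → Label → List Dmd → Prop
  | nil (x : Label) : LPath E x x []
  | fwd {x z y : Label} {ds : List Dmd} :
      (x, z) ∈ E → LPath E z y ds → LPath E x y (Dmd.wd :: ds)
  | bwd {x z y : Label} {ds : List Dmd} :
      (z, x) ∈ E → LPath E z y ds → LPath E x y (Dmd.bd :: ds)

/-- The labeled propagation rules `LabPr(P)` (premise, conclusion):
    from `R, x:⟨?⟩A, y:A, Γ` infer `R, x:⟨?⟩A, Γ`, provided there is a path `π`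
    from `x` to `y` in the propagation graph of the premise whose string `Π`
    satisfies `ΠA → ⟨?⟩A ∈ (P ∪ I(P))*`. -/
def LabPr (P : Set PathAx) : LSeq → LSeq → Prop :=
  fun prem concl =>
    ∃ (R : RelSet) (Γ : Multiset (Label × Formula)) (x y : Label)
      (A : Formula) (d : Dmd) (Pi : List Dmd),
      prem = (R, (x, dmdF d A) ::ₘ (y, A) ::ₘ Γ) ∧
      concl = (R, (x, dmdF d A) ::ₘ Γ) ∧
      LPath R x y Pi ∧ PStar P ⟨Pi, d⟩

/-! ## Labeled graphs, labeled polytrees, and the translations 𝔏 and 𝔑 -/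

/-- A labeled graph `(V, E, L)`: vertices decorated with multisets of formulae. -/
structure LGraph : Type where
  V : Finset Label
  E : Finset (Label × Label)
  L : Label → Multiset Formula

/-- Union of labeled graphs (multiset union of labels at shared vertices). -/
def LGraph.union (G H : LGraph) : LGraph :=
  ⟨G.V ∪ H.V, G.E ∪ H.E, fun z => G.L z + H.L z⟩

/-- Isomorphism of labeled graphs: a bijection between the vertex sets
    preserving edges and vertex labels. -/
def LGraph.Iso (G H : LGraph) : Prop :=
  ∃ f : Label → Label, Set.BijOn f ↑G.V ↑H.V ∧
    (∀ u ∈ G.V, ∀ v ∈ G.V, ((u, v) ∈ G.E ↔ (f u, f v) ∈ H.E)) ∧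
    (∀ v ∈ G.V, G.L v = H.L (f v))

/-- A labeled graph is a labeled polytree when its underlying undirected
    graph is a tree. -/
def LGraph.IsPolytree (G : LGraph) : Prop :=
  (∀ x y : Label, (x, y) ∈ G.E → (y, x) ∉ G.E) ∧
  (∀ e ∈ G.E, e.1 ∈ G.V ∧ e.2 ∈ G.V) ∧
  ((SimpleGraph.fromRel fun a b => (a, b) ∈ G.E).induce (↑G.V : Set Label)).IsTree

/-- The translation `𝔏ₓ` from nested sequents to labeled graphs (relational,
    since fresh vertices may be chosen arbitrarily): `LabT x X G` states that
    `G` is a labeled graph obtained by translating `X` starting at vertex `x`. -/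
inductive LabT : Label → NSeq → LGraph → Prop
  | empty (x : Label) : LabT x .empty ⟨∅, ∅, fun _ => 0⟩
  | fml (x : Label) (A : Formula) :
      LabT x (.fml A) ⟨{x}, ∅, fun z => if z = x then {A} else 0⟩
  | comma {x : Label} {X Y : NSeq} {G H : LGraph} :
      LabT x X G → LabT x Y H → G.V ∩ H.V ⊆ {x} →
      LabT x (X.comma Y) (G.union H)
  | white {x y : Label} {X : NSeq} {G : LGraph} :
      LabT y X G → x ∉ G.V → x ≠ y →
      LabT x X.white ⟨insert x (insert y G.V), insert (x, y) G.E, G.L⟩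
  | black {x y : Label} {X : NSeq} {G : LGraph} :
      LabT y X G → x ∉ G.V → x ≠ y →
      LabT x X.black ⟨insert x (insert y G.V), insert (y, x) G.E, G.L⟩

/-- The translation `𝔑ₓ` from labeled polytrees (rooted at a chosen vertex `x`)
    to nested sequents: the inverse of the translation `𝔏ₓ`. -/
def NTrans (x : Label) (G : LGraph) (X : NSeq) : Prop := LabT x X G

/-- The labeled graph of a labeled sequent `R, Γ`: vertices are the occurring
    labels, edges are given by `R`, and each vertex `x` is labeled by the
    multiset `{A | x:A ∈ Γ}`. -/
def toLGraph (R : RelSet) (Γ : Multiset (Label × Formula)) : LGraph where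
  V := R.image Prod.fst ∪ R.image Prod.snd ∪ (Γ.map Prod.fst).toFinset
  E := R
  L := fun z => (Γ.filter fun p => p.1 = z).map Prod.snd

/-- The multiset of labeled formulae of a labeled graph, read as a sequent. -/
def LGraph.toSeqGamma (G : LGraph) : Multiset (Label × Formula) :=
  G.V.val.bind fun v => (G.L v).map fun A => (v, A)

/-- The set of labels occurring in a labeled sequent. -/
def seqLabels (R : RelSet) (Γ : Multiset (Label × Formula)) : Set Label :=
  {z | (∃ w, (z, w) ∈ R ∨ (w, z) ∈ R) ∨ ∃ A, (z, A) ∈ Γ}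

/-- `R, Γ` is a labeled polytree sequent: its underlying undirected graph
    (on the occurring labels) is a tree. -/
def IsPolytreeSeq (R : RelSet) (Γ : Multiset (Label × Formula)) : Prop :=
  (∀ x y : Label, (x, y) ∈ R → (y, x) ∉ R) ∧
  ((SimpleGraph.fromRel fun a b => (a, b) ∈ R).induce (seqLabels R Γ)).IsTree

/-- The labeled edges `(u, v, ◇)` and `(v, u, ◆)` of the propagation graph
    determined by an edge set. -/
def propEdges (E : Finset (Label × Label)) : Set (Label × Label × Dmd) :=
  {e | ∃ u v : Label, (u, v) ∈ E ∧ (e = (u, v, Dmd.wd) ∨ e = (v, u, Dmd.bd))}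

/-- The deep propagation rules `DeepPr(P)` (premise, conclusion), expressed via
    the labeled polytree representation of nested sequents: from
    `X[⟨?⟩A]ᵢ[A]ⱼ` infer `X[⟨?⟩A]ᵢ[∅]ⱼ`, provided there is a path from node `i`
    (= `u`) to node `j` (= `v`) in the propagation graph of the premise whose
    string `Π` satisfies `ΠA → ⟨?⟩A ∈ (P ∪ I(P))*`. -/
def DeepPrL (P : Set PathAx) : NSeq → NSeq → Prop :=
  fun prem concl =>
    ∃ (r : Label) (G : LGraph) (u v : Label) (A : Formula) (d : Dmd)
      (Pi : List Dmd),
      LabT r prem G ∧ LPath G.E u v Pi ∧ PStar P ⟨Pi, d⟩ ∧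
      dmdF d A ∈ G.L u ∧ A ∈ G.L v ∧
      LabT r concl ⟨G.V, G.E, fun z => if z = v then (G.L v).erase A else G.L z⟩

/-- Substitution of the label `y` by the label `x`. -/
def subLabel (x y z : Label) : Label := if z = y then x else z


section G3KtToDKT
set_option autoImplicit false
set_option maxHeartbeats 1000000

open NSeq

instance : Trans NEquiv NEquiv NEquiv := ⟨NEquiv.trans⟩

theorem LGraph.ext' {G H : LGraph} (h1 : G.V = H.V) (h2 : G.E = H.E) (h3 : G.L = H.L) : G = H := by
  cases G; cases H; simp_all

def emptyG : LGraph := ⟨∅, ∅, fun _ => 0⟩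

theorem union_comm (G H : LGraph) : G.union H = H.union G :=
  LGraph.ext' (Finset.union_comm _ _) (Finset.union_comm _ _) (funext fun _ => add_comm _ _)

theorem union_assoc (G H K : LGraph) : (G.union H).union K = G.union (H.union K) :=
  LGraph.ext' (Finset.union_assoc _ _ _) (Finset.union_assoc _ _ _) (funext fun _ => add_assoc _ _ _)

theorem union_emptyG (G : LGraph) : G.union ⟨∅, ∅, fun _ => 0⟩ = G :=
  LGraph.ext' (by simp [LGraph.union]) (by simp [LGraph.union])
    (funext fun z => by simp [LGraph.union])

theorem emptyG_union (G : LGraph) : LGraph.union ⟨∅, ∅, fun _ => 0⟩ G = G := by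
  rw [union_comm]; exact union_emptyG G

theorem labT_supp {r : Label} {X : NSeq} {G : LGraph} (h : LabT r X G) :
    ∀ z, z ∉ G.V → G.L z = 0 := by
  induction h with
  | empty => intro z _; rfl
  | fml x A => intro z hz; simp at hz; simp [hz]
  | comma h1 h2 hsub ih1 ih2 =>
      intro z hz
      simp [LGraph.union] at hz ⊢
      simp [ih1 z hz.1, ih2 z hz.2]
  | white h1 hx hxy ih =>
      intro z hz; simp at hz
      exact ih z hz.2.2
  | black h1 hx hxy ih =>
      intro z hz; simp at hz
      exact ih z hz.2.2

theorem labT_edge {r : Label} {X : NSeq} {G : LGraph} (h : LabT r X G) :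
    ∀ a b, (a, b) ∈ G.E → a ∈ G.V ∧ b ∈ G.V ∧ a ≠ b := by
  induction h with
  | empty => intro a b hab; simp at hab
  | fml x A => intro a b hab; simp at hab
  | comma h1 h2 hsub ih1 ih2 =>
      intro a b hab
      simp [LGraph.union] at hab ⊢
      rcases hab with h | h
      · exact ⟨Or.inl (ih1 a b h).1, Or.inl (ih1 a b h).2.1, (ih1 a b h).2.2⟩
      · exact ⟨Or.inr (ih2 a b h).1, Or.inr (ih2 a b h).2.1, (ih2 a b h).2.2⟩
  | @white x y X G h1 hx hxy ih =>
      intro a b hab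
      simp at hab ⊢
      rcases hab with ⟨rfl, rfl⟩ | h
      · exact ⟨Or.inl rfl, Or.inr (Or.inl rfl), hxy⟩
      · exact ⟨Or.inr (Or.inr (ih a b h).1), Or.inr (Or.inr (ih a b h).2.1), (ih a b h).2.2⟩
  | @black x y X G h1 hx hxy ih =>
      intro a b hab
      simp at hab ⊢
      rcases hab with ⟨rfl, rfl⟩ | h
      · exact ⟨Or.inr (Or.inl rfl), Or.inl rfl, fun e => hxy e.symm⟩
      · exact ⟨Or.inr (Or.inr (ih a b h).1), Or.inr (Or.inr (ih a b h).2.1), (ih a b h).2.2⟩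

theorem nequiv_labT_both {X Y : NSeq} (h : NEquiv X Y) :
    (∀ r G, LabT r X G → LabT r Y G) ∧ (∀ r G, LabT r Y G → LabT r X G) := by
  induction h with
  | refl X => exact ⟨fun _ _ h => h, fun _ _ h => h⟩
  | symm _ ih => exact ⟨ih.2, ih.1⟩
  | trans _ _ ih1 ih2 => exact ⟨fun r G h => ih2.1 r G (ih1.1 r G h), fun r G h => ih1.2 r G (ih2.2 r G h)⟩
  | comm X Y =>
      constructor <;>
      · intro r G h
        cases h with
        | comma h1 h2 hsub =>
            rw [union_comm]
            exact LabT.comma h2 h1 (by rwa [Finset.inter_comm])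
  | assoc X Y Z =>
      constructor
      · intro r G h
        cases h with
        | comma h12 h3 hsub =>
            cases h12 with
            | comma h1 h2 hsub' =>
                rw [union_assoc]
                refine LabT.comma h1 (LabT.comma h2 h3 ?_) ?_
                · intro z hz
                  rw [Finset.mem_inter] at hz
                  exact hsub (Finset.mem_inter.2 ⟨Finset.mem_union.2 (Or.inr hz.1), hz.2⟩)
                · intro z hz
                  rw [Finset.mem_inter] at hz
                  rcases Finset.mem_union.1 hz.2 with h | h
                  · exact hsub' (Finset.mem_inter.2 ⟨hz.1, h⟩)
                  · exact hsub (Finset.mem_inter.2 ⟨Finset.mem_union.2 (Or.inl hz.1), h⟩)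
      · intro r G h
        cases h with
        | comma h1 h23 hsub =>
            cases h23 with
            | comma h2 h3 hsub' =>
                rw [← union_assoc]
                refine LabT.comma (LabT.comma h1 h2 ?_) h3 ?_
                · intro z hz
                  rw [Finset.mem_inter] at hz
                  exact hsub (Finset.mem_inter.2 ⟨hz.1, Finset.mem_union.2 (Or.inl hz.2)⟩)
                · intro z hz
                  rw [Finset.mem_inter] at hz
                  rcases Finset.mem_union.1 hz.1 with h | h
                  · exact hsub (Finset.mem_inter.2 ⟨h, Finset.mem_union.2 (Or.inr hz.2)⟩)
                  · exact hsub' (Finset.mem_inter.2 ⟨h, hz.2⟩)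
  | unit X =>
      constructor
      · intro r G h
        cases h with
        | comma h1 h2 hsub => cases h2; rw [union_emptyG]; exact h1
      · intro r G h
        have := LabT.comma h (LabT.empty r) (by simp)
        rwa [union_emptyG] at this
  | commaCongr _ _ ih1 ih2 =>
      constructor <;>
      · intro r G h
        cases h with
        | comma h1 h2 hsub =>
            first
            | exact LabT.comma (ih1.1 _ _ h1) (ih2.1 _ _ h2) hsub
            | exact LabT.comma (ih1.2 _ _ h1) (ih2.2 _ _ h2) hsub
  | whiteCongr _ ih =>
      constructor <;>
      · intro r G h
        cases h with
        | white h1 hx hxy =>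
            first
            | exact LabT.white (ih.1 _ _ h1) hx hxy
            | exact LabT.white (ih.2 _ _ h1) hx hxy
  | blackCongr _ ih =>
      constructor <;>
      · intro r G h
        cases h with
        | black h1 hx hxy =>
            first
            | exact LabT.black (ih.1 _ _ h1) hx hxy
            | exact LabT.black (ih.2 _ _ h1) hx hxy

theorem labT_equiv {X Y : NSeq} {r : Label} {G : LGraph} (h : NEquiv X Y)
    (hX : LabT r X G) : LabT r Y G := (nequiv_labT_both h).1 r G hX

-- === Stage 2 (assumes dev1 content; standalone for check) ===
namespace NEquiv

theorem eL {X X' : NSeq} (Y : NSeq) (h : NEquiv X X') : NEquiv (X.comma Y) (X'.comma Y) :=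
  commaCongr h (refl Y)

theorem eR (X : NSeq) {Y Y' : NSeq} (h : NEquiv Y Y') : NEquiv (X.comma Y) (X.comma Y') :=
  commaCongr (refl X) h

theorem unitL (X : NSeq) : NEquiv (NSeq.empty.comma X) X := trans (comm _ _) (unit X)

theorem swap (X Y Z : NSeq) : NEquiv (X.comma (Y.comma Z)) (Y.comma (X.comma Z)) :=
  trans (symm (assoc X Y Z)) (trans (eL Z (comm X Y)) (assoc Y X Z))

theorem pull (X Y Z : NSeq) : NEquiv ((X.comma Y).comma Z) ((X.comma Z).comma Y) :=
  trans (assoc X Y Z) (trans (eR X (comm Y Z)) (symm (assoc X Z Y)))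

end NEquiv

inductive IsFmls : NSeq → Multiset Formula → Prop
  | empty : IsFmls .empty 0
  | fml (A : Formula) : IsFmls (.fml A) {A}
  | comma {X Y : NSeq} {M N : Multiset Formula} :
      IsFmls X M → IsFmls Y N → IsFmls (X.comma Y) (M + N)

theorem isFmls_extract {Y : NSeq} {M : Multiset Formula} (h : IsFmls Y M)
    {F : Formula} (hF : F ∈ M) :
    ∃ Y', NEquiv Y ((NSeq.fml F).comma Y') ∧ IsFmls Y' (M.erase F) := by
  induction h with
  | empty => simp at hF
  | fml A =>
      have : F = A := by simpa using hF
      subst this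
      exact ⟨.empty, NEquiv.symm (NEquiv.unit _), by simpa using IsFmls.empty⟩
  | @comma X Y M N h1 h2 ih1 ih2 =>
      rcases Multiset.mem_add.1 hF with hM | hN
      · obtain ⟨Y', he, hf⟩ := ih1 hM
        refine ⟨Y'.comma Y, ?_, ?_⟩
        · exact NEquiv.trans (NEquiv.eL _ he) (NEquiv.assoc _ _ _)
        · rw [Multiset.erase_add_left_pos _ hM]; exact IsFmls.comma hf h2
      · obtain ⟨Y', he, hf⟩ := ih2 hN
        refine ⟨X.comma Y', ?_, ?_⟩
        · exact NEquiv.trans (NEquiv.eR _ he) (NEquiv.swap _ _ _)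
        · rw [Multiset.erase_add_right_pos _ hN]; exact IsFmls.comma h1 hf

theorem isFmls_labT {Y : NSeq} {M : Multiset Formula} (h : IsFmls Y M) (v : Label) :
    ∃ W : Finset Label, W ⊆ {v} ∧ LabT v Y ⟨W, ∅, fun z => if z = v then M else 0⟩ := by
  induction h with
  | empty =>
      refine ⟨∅, by simp, ?_⟩
      have : (fun z => if z = v then (0 : Multiset Formula) else 0) = fun _ => (0 : Multiset Formula) := by
        funext z; split <;> rfl
      rw [LGraph.ext' (G := ⟨∅, ∅, fun z => if z = v then (0:Multiset Formula) else 0⟩)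
        (H := ⟨∅, ∅, fun _ => 0⟩) rfl rfl this]
      exact LabT.empty v
  | fml A => exact ⟨{v}, by simp, LabT.fml v A⟩
  | @comma X Y M N h1 h2 ih1 ih2 =>
      obtain ⟨W1, hW1, hl1⟩ := ih1
      obtain ⟨W2, hW2, hl2⟩ := ih2
      refine ⟨W1 ∪ W2, Finset.union_subset hW1 hW2, ?_⟩
      have := LabT.comma hl1 hl2 (fun z hz => hW1 (Finset.mem_inter.1 hz).1)
      have heq : (LGraph.union ⟨W1, ∅, fun z => if z = v then M else 0⟩
          ⟨W2, ∅, fun z => if z = v then N else 0⟩) =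
          ⟨W1 ∪ W2, ∅, fun z => if z = v then M + N else 0⟩ := by
        refine LGraph.ext' rfl (by simp [LGraph.union]) (funext fun z => ?_)
        show (if z = v then M else 0) + (if z = v then N else 0) = if z = v then M + N else 0
        split <;> simp
      rwa [heq] at this

def Ctx.comp : Ctx → Ctx → Ctx
  | .hole, D => D
  | .commaL C Y, D => .commaL (C.comp D) Y
  | .white C, D => .white (C.comp D)
  | .black C, D => .black (C.comp D)

theorem Ctx.comp_fill (C D : Ctx) (X : NSeq) : (C.comp D).fill X = C.fill (D.fill X) := by
  induction C <;> simp [Ctx.comp, Ctx.fill, *]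

theorem fill_congr (C : Ctx) {X Y : NSeq} (h : NEquiv X Y) : NEquiv (C.fill X) (C.fill Y) := by
  induction C with
  | hole => exact h
  | commaL C Z ih => exact NEquiv.eL _ ih
  | white C ih => exact NEquiv.whiteCongr ih
  | black C ih => exact NEquiv.blackCongr ih

inductive TopC : Ctx → Prop
  | hole : TopC .hole
  | commaL {C : Ctx} (Y : NSeq) : TopC C → TopC (.commaL C Y)

theorem topC_fill {C : Ctx} (h : TopC C) (Z : NSeq) :
    NEquiv (C.fill Z) (Z.comma (C.fill .empty)) := by
  induction h with
  | hole => exact NEquiv.symm (NEquiv.unit Z)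
  | @commaL C Y hC ih =>
      show NEquiv ((C.fill Z).comma Y) (Z.comma ((C.fill .empty).comma Y))
      exact NEquiv.trans (NEquiv.eL Y ih) (NEquiv.assoc _ _ _)

theorem topC_comp {C D : Ctx} (hC : TopC C) (hD : TopC D) : TopC (C.comp D) := by
  induction hC with
  | hole => exact hD
  | commaL Y _ ih => exact TopC.commaL Y ih

local infix:50 " =~ " => NEquiv

def LGraph.clearAt (G : LGraph) (v : Label) : LGraph :=
  ⟨G.V, G.E, fun z => if z = v then 0 else G.L z⟩

def LGraph.addF (G : LGraph) (v : Label) (B : Formula) : LGraph :=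
  ⟨G.V, G.E, fun z => if z = v then B ::ₘ G.L z else G.L z⟩

theorem labT_at {r : Label} {X : NSeq} {G : LGraph} (h : LabT r X G) (v : Label) :
    ∃ (C : Ctx) (Y : NSeq), NEquiv X (C.fill Y) ∧ IsFmls Y (G.L v) ∧ (v = r → TopC C) ∧
      ∀ Z H, LabT v Z H → v ∈ H.V → H.V ∩ G.V ⊆ {v} → v ∈ G.V →
        LabT r (C.fill Z) ((G.clearAt v).union H) := by
  induction h with
  | empty x =>
      refine ⟨.hole, .empty, NEquiv.refl _, IsFmls.empty, fun _ => TopC.hole, ?_⟩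
      intro Z H _ _ _ hvG; simp at hvG
  | fml x A =>
      by_cases hvx : v = x
      · subst hvx
        refine ⟨.hole, .fml A, NEquiv.refl _, by simpa using IsFmls.fml A,
          fun _ => TopC.hole, ?_⟩
        intro Z H hZ hvH hsubH _
        have hg : (LGraph.clearAt ⟨{v}, ∅, fun z => if z = v then ({A} : Multiset Formula) else 0⟩ v).union H = H := by
          refine LGraph.ext' ?_ (by simp [LGraph.union, LGraph.clearAt]) (funext fun z => ?_)
          · show {v} ∪ H.V = H.V
            ext w; simp; rintro rfl; exact hvH
          · show (if z = v then 0 else if z = v then ({A} : Multiset Formula) else 0) + H.L z = H.L z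
            split <;> simp
        rw [hg]; exact hZ
      · refine ⟨.commaL .hole (.fml A), .empty, NEquiv.symm (NEquiv.unitL _), ?_,
          fun _ => TopC.commaL _ TopC.hole, ?_⟩
        · show IsFmls .empty (if v = x then {A} else 0)
          simp [hvx]; exact IsFmls.empty
        · intro Z H _ _ _ hvG
          simp at hvG; exact absurd hvG hvx
  | @comma x X₁ X₂ G₁ G₂ h1 h2 hsub ih1 ih2 =>
      obtain ⟨C₁, Y₁, he₁, hf₁, ht₁, hins₁⟩ := ih1
      obtain ⟨C₂, Y₂, he₂, hf₂, ht₂, hins₂⟩ := ih2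
      by_cases hv1 : v ∈ G₁.V <;> by_cases hv2 : v ∈ G₂.V
      · -- v in both, so v = x
        have hvx : v = x := by
          have := hsub (Finset.mem_inter.2 ⟨hv1, hv2⟩); simpa using this
        subst hvx
        refine ⟨C₁.comp C₂, Y₁.comma Y₂, ?_, IsFmls.comma hf₁ hf₂,
          fun _ => topC_comp (ht₁ rfl) (ht₂ rfl), ?_⟩
        · calc X₁.comma X₂
              =~ (Y₁.comma (C₁.fill .empty)).comma (Y₂.comma (C₂.fill .empty)) :=
                NEquiv.commaCongr (he₁.trans (topC_fill (ht₁ rfl) Y₁))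
                  (he₂.trans (topC_fill (ht₂ rfl) Y₂))
            _ =~ ((Y₁.comma (Y₂.comma (C₂.fill .empty))).comma (C₁.fill .empty)) :=
                NEquiv.pull _ _ _
            _ =~ (((Y₁.comma Y₂).comma (C₂.fill .empty)).comma (C₁.fill .empty)) :=
                NEquiv.eL _ (NEquiv.symm (NEquiv.assoc _ _ _))
            _ =~ ((C₂.fill (Y₁.comma Y₂)).comma (C₁.fill .empty)) :=
                NEquiv.eL _ (NEquiv.symm (topC_fill (ht₂ rfl) _))
            _ =~ (C₁.fill (C₂.fill (Y₁.comma Y₂))) := NEquiv.symm (topC_fill (ht₁ rfl) _)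
            _ =~ ((C₁.comp C₂).fill (Y₁.comma Y₂)) := by rw [Ctx.comp_fill]; exact NEquiv.refl _
        · intro Z H hZ hvH hsubH _
          have step2 : LabT v (C₂.fill Z) ((G₂.clearAt v).union H) := by
            refine hins₂ Z H hZ hvH ?_ hv2
            intro z hz; rw [Finset.mem_inter] at hz
            exact hsubH (Finset.mem_inter.2 ⟨hz.1, Finset.mem_union.2 (Or.inr hz.2)⟩)
          have step1 := hins₁ (C₂.fill Z) ((G₂.clearAt v).union H)
            step2
            (by exact Finset.mem_union.2 (Or.inr hvH))
            (by
              intro z hz; rw [Finset.mem_inter] at hz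
              rcases Finset.mem_union.1 hz.1 with h | h
              · have := hsub (Finset.mem_inter.2 ⟨hz.2, h⟩)
                simpa using this
              · exact hsubH (Finset.mem_inter.2 ⟨h, Finset.mem_union.2 (Or.inl hz.2)⟩))
            hv1
          rw [Ctx.comp_fill]
          have hg : (G₁.clearAt v).union ((G₂.clearAt v).union H) =
              ((G₁.union G₂).clearAt v).union H := by
            refine LGraph.ext' ?_ ?_ (funext fun z => ?_)
            · show G₁.V ∪ (G₂.V ∪ H.V) = (G₁.V ∪ G₂.V) ∪ H.V
              rw [Finset.union_assoc]
            · show G₁.E ∪ (G₂.E ∪ H.E) = (G₁.E ∪ G₂.E) ∪ H.E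
              rw [Finset.union_assoc]
            · show (if z = v then 0 else G₁.L z) + ((if z = v then 0 else G₂.L z) + H.L z)
                = (if z = v then 0 else G₁.L z + G₂.L z) + H.L z
              split <;> simp [add_assoc]
          rw [← hg]; exact step1
      · -- v only in G₁ (or neither-in-G₂)
        refine ⟨Ctx.commaL C₁ X₂, Y₁, NEquiv.eL _ he₁, ?_, ?_, ?_⟩
        · show IsFmls Y₁ (G₁.L v + G₂.L v)
          rw [labT_supp h2 v hv2, add_zero]; exact hf₁
        · exact fun hvr => TopC.commaL _ (ht₁ hvr)
        · intro Z H hZ hvH hsubH _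
          have step := hins₁ Z H hZ hvH (by
            intro z hz; rw [Finset.mem_inter] at hz
            exact hsubH (Finset.mem_inter.2 ⟨hz.1, Finset.mem_union.2 (Or.inl hz.2)⟩)) hv1
          have hc : ((G₁.clearAt v).union H).V ∩ G₂.V ⊆ {x} := by
            intro z hz; rw [Finset.mem_inter] at hz
            rcases Finset.mem_union.1 hz.1 with h | h
            · exact hsub (Finset.mem_inter.2 ⟨h, hz.2⟩)
            · have := hsubH (Finset.mem_inter.2 ⟨h, Finset.mem_union.2 (Or.inr hz.2)⟩)
              simp at this; subst this; exact absurd hz.2 hv2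
          have := LabT.comma step h2 hc
          have hg : ((G₁.clearAt v).union H).union G₂ = ((G₁.union G₂).clearAt v).union H := by
            refine LGraph.ext' ?_ ?_ (funext fun z => ?_)
            · show (G₁.V ∪ H.V) ∪ G₂.V = (G₁.V ∪ G₂.V) ∪ H.V
              rw [Finset.union_right_comm]
            · show (G₁.E ∪ H.E) ∪ G₂.E = (G₁.E ∪ G₂.E) ∪ H.E
              rw [Finset.union_right_comm]
            · show ((if z = v then 0 else G₁.L z) + H.L z) + G₂.L z
                = (if z = v then 0 else G₁.L z + G₂.L z) + H.L z
              by_cases hzv : z = v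
              · subst hzv; simp [labT_supp h2 _ hv2]
              · simp only [if_neg hzv]; rw [add_right_comm]
          rwa [hg] at this
      · -- v only in G₂
        refine ⟨Ctx.commaL C₂ X₁, Y₂, (NEquiv.comm _ _).trans (NEquiv.eL _ he₂), ?_, ?_, ?_⟩
        · show IsFmls Y₂ (G₁.L v + G₂.L v)
          rw [labT_supp h1 v hv1, zero_add]; exact hf₂
        · exact fun hvr => TopC.commaL _ (ht₂ hvr)
        · intro Z H hZ hvH hsubH _
          have step := hins₂ Z H hZ hvH (by
            intro z hz; rw [Finset.mem_inter] at hz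
            exact hsubH (Finset.mem_inter.2 ⟨hz.1, Finset.mem_union.2 (Or.inr hz.2)⟩)) hv2
          have hc : ((G₂.clearAt v).union H).V ∩ G₁.V ⊆ {x} := by
            intro z hz; rw [Finset.mem_inter] at hz
            rcases Finset.mem_union.1 hz.1 with h | h
            · exact hsub (Finset.mem_inter.2 ⟨hz.2, h⟩)
            · have := hsubH (Finset.mem_inter.2 ⟨h, Finset.mem_union.2 (Or.inl hz.2)⟩)
              simp at this; subst this; exact absurd hz.2 hv1
          have := LabT.comma step h1 hc
          have hg : ((G₂.clearAt v).union H).union G₁ = ((G₁.union G₂).clearAt v).union H := by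
            refine LGraph.ext' ?_ ?_ (funext fun z => ?_)
            · show (G₂.V ∪ H.V) ∪ G₁.V = (G₁.V ∪ G₂.V) ∪ H.V
              rw [Finset.union_right_comm, Finset.union_comm G₂.V G₁.V]
            · show (G₂.E ∪ H.E) ∪ G₁.E = (G₁.E ∪ G₂.E) ∪ H.E
              rw [Finset.union_right_comm, Finset.union_comm G₂.E G₁.E]
            · show ((if z = v then 0 else G₂.L z) + H.L z) + G₁.L z
                = (if z = v then 0 else G₁.L z + G₂.L z) + H.L z
              by_cases hzv : z = v
              · subst hzv; simp [labT_supp h1 _ hv1]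
              · simp only [if_neg hzv]; rw [add_right_comm, add_comm (G₂.L z) (G₁.L z)]
          rwa [hg] at this
      · -- v in neither
        refine ⟨Ctx.commaL .hole (X₁.comma X₂), .empty, NEquiv.symm (NEquiv.unitL _), ?_,
          fun _ => TopC.commaL _ TopC.hole, ?_⟩
        · show IsFmls .empty (G₁.L v + G₂.L v)
          rw [labT_supp h1 v hv1, labT_supp h2 v hv2]; exact IsFmls.empty
        · intro Z H _ _ _ hvG
          rcases Finset.mem_union.1 hvG with h | h
          · exact absurd h hv1
          · exact absurd h hv2
  | @white x y X₀ G₀ h1 hx hxy ih =>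
      by_cases hvx : v = x
      · subst hvx
        refine ⟨Ctx.commaL .hole X₀.white, .empty, NEquiv.symm (NEquiv.unitL _), ?_,
          fun _ => TopC.commaL _ TopC.hole, ?_⟩
        · show IsFmls .empty (G₀.L v)
          rw [labT_supp h1 v hx]; exact IsFmls.empty
        · intro Z H hZ hvH hsubH _
          have hw : LabT v X₀.white ⟨insert v (insert y G₀.V), insert (v, y) G₀.E, G₀.L⟩ :=
            LabT.white h1 hx hxy
          have hcm := LabT.comma hZ hw hsubH
          have hg : H.union ⟨insert v (insert y G₀.V), insert (v, y) G₀.E, G₀.L⟩ =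
              (LGraph.clearAt ⟨insert v (insert y G₀.V), insert (v, y) G₀.E, G₀.L⟩ v).union H := by
            refine LGraph.ext' (Finset.union_comm _ _) (Finset.union_comm _ _) (funext fun z => ?_)
            show H.L z + G₀.L z = (if z = v then 0 else G₀.L z) + H.L z
            by_cases hzv : z = v
            · subst hzv; simp [labT_supp h1 _ hx]
            · simp only [if_neg hzv]; rw [add_comm]
          rwa [hg] at hcm
      · by_cases hv0 : v ∈ G₀.V
        · obtain ⟨C₀, Y₀, he₀, hf₀, ht₀, hins₀⟩ := ih
          refine ⟨Ctx.white C₀, Y₀, NEquiv.whiteCongr he₀, hf₀,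
            fun hvr => absurd hvr hvx, ?_⟩
          intro Z H hZ hvH hsubH _
          have step := hins₀ Z H hZ hvH (by
            intro z hz; rw [Finset.mem_inter] at hz
            exact hsubH (Finset.mem_inter.2 ⟨hz.1,
              Finset.mem_insert_of_mem (Finset.mem_insert_of_mem hz.2)⟩)) hv0
          have hxH : x ∉ ((G₀.clearAt v).union H).V := by
            intro hmem
            rcases Finset.mem_union.1 hmem with h | h
            · exact hx h
            · have := hsubH (Finset.mem_inter.2 ⟨h, Finset.mem_insert_self x _⟩)
              simp at this; exact hvx this.symm
          have hw := LabT.white step hxH hxy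
          have hg : (⟨insert x (insert y ((G₀.clearAt v).union H).V),
              insert (x, y) ((G₀.clearAt v).union H).E, ((G₀.clearAt v).union H).L⟩ : LGraph) =
              (LGraph.clearAt ⟨insert x (insert y G₀.V), insert (x, y) G₀.E, G₀.L⟩ v).union H := by
            refine LGraph.ext' ?_ ?_ (funext fun z => rfl)
            · show insert x (insert y (G₀.V ∪ H.V)) = insert x (insert y G₀.V) ∪ H.V
              rw [Finset.insert_union, Finset.insert_union]
            · show insert (x, y) (G₀.E ∪ H.E) = insert (x, y) G₀.E ∪ H.E
              rw [Finset.insert_union]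
          rwa [hg] at hw
        · by_cases hvy : v = y
          · subst hvy
            refine ⟨Ctx.white (Ctx.commaL .hole X₀), .empty,
              NEquiv.whiteCongr (NEquiv.symm (NEquiv.unitL _)), ?_,
              fun hvr => absurd hvr hvx, ?_⟩
            · show IsFmls .empty (G₀.L v)
              rw [labT_supp h1 v hv0]; exact IsFmls.empty
            · intro Z H hZ hvH hsubH hvG
              have hcm := LabT.comma hZ h1 (by
                intro z hz; rw [Finset.mem_inter] at hz
                exact hsubH (Finset.mem_inter.2 ⟨hz.1,
                  Finset.mem_insert_of_mem (Finset.mem_insert_of_mem hz.2)⟩))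
              have hxH : x ∉ (H.union G₀).V := by
                intro hmem
                rcases Finset.mem_union.1 hmem with h | h
                · have := hsubH (Finset.mem_inter.2 ⟨h, Finset.mem_insert_self x _⟩)
                  simp at this; exact hvx this.symm
                · exact hx h
              have hw := LabT.white hcm hxH hxy
              have hg : (⟨insert x (insert v (H.union G₀).V),
                  insert (x, v) (H.union G₀).E, (H.union G₀).L⟩ : LGraph) =
                  (LGraph.clearAt ⟨insert x (insert v G₀.V), insert (x, v) G₀.E, G₀.L⟩ v).union H := by
                refine LGraph.ext' ?_ ?_ (funext fun z => ?_)
                · show insert x (insert v (H.V ∪ G₀.V)) = insert x (insert v G₀.V) ∪ H.V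
                  ext z; simp [Finset.mem_insert, Finset.mem_union]; tauto
                · show insert (x, v) (H.E ∪ G₀.E) = insert (x, v) G₀.E ∪ H.E
                  ext p; simp [Finset.mem_insert, Finset.mem_union]; tauto
                · show H.L z + G₀.L z = (if z = v then 0 else G₀.L z) + H.L z
                  by_cases hzv : z = v
                  · subst hzv; simp [labT_supp h1 _ hv0]
                  · simp only [if_neg hzv]; rw [add_comm]
              rwa [hg] at hw
          · refine ⟨Ctx.commaL .hole X₀.white, .empty, NEquiv.symm (NEquiv.unitL _), ?_,
              fun _ => TopC.commaL _ TopC.hole, ?_⟩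
            · show IsFmls .empty (G₀.L v)
              rw [labT_supp h1 v hv0]; exact IsFmls.empty
            · intro Z H _ _ _ hvG
              simp at hvG
              rcases hvG with h | h | h
              exacts [absurd h hvx, absurd h hvy, absurd h hv0]
  | @black x y X₀ G₀ h1 hx hxy ih =>
      by_cases hvx : v = x
      · subst hvx
        refine ⟨Ctx.commaL .hole X₀.black, .empty, NEquiv.symm (NEquiv.unitL _), ?_,
          fun _ => TopC.commaL _ TopC.hole, ?_⟩
        · show IsFmls .empty (G₀.L v)
          rw [labT_supp h1 v hx]; exact IsFmls.empty
        · intro Z H hZ hvH hsubH _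
          have hw : LabT v X₀.black ⟨insert v (insert y G₀.V), insert (y, v) G₀.E, G₀.L⟩ :=
            LabT.black h1 hx hxy
          have hcm := LabT.comma hZ hw hsubH
          have hg : H.union ⟨insert v (insert y G₀.V), insert (y, v) G₀.E, G₀.L⟩ =
              (LGraph.clearAt ⟨insert v (insert y G₀.V), insert (y, v) G₀.E, G₀.L⟩ v).union H := by
            refine LGraph.ext' (Finset.union_comm _ _) (Finset.union_comm _ _) (funext fun z => ?_)
            show H.L z + G₀.L z = (if z = v then 0 else G₀.L z) + H.L z
            by_cases hzv : z = v
            · subst hzv; simp [labT_supp h1 _ hx]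
            · simp only [if_neg hzv]; rw [add_comm]
          rwa [hg] at hcm
      · by_cases hv0 : v ∈ G₀.V
        · obtain ⟨C₀, Y₀, he₀, hf₀, ht₀, hins₀⟩ := ih
          refine ⟨Ctx.black C₀, Y₀, NEquiv.blackCongr he₀, hf₀,
            fun hvr => absurd hvr hvx, ?_⟩
          intro Z H hZ hvH hsubH _
          have step := hins₀ Z H hZ hvH (by
            intro z hz; rw [Finset.mem_inter] at hz
            exact hsubH (Finset.mem_inter.2 ⟨hz.1,
              Finset.mem_insert_of_mem (Finset.mem_insert_of_mem hz.2)⟩)) hv0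
          have hxH : x ∉ ((G₀.clearAt v).union H).V := by
            intro hmem
            rcases Finset.mem_union.1 hmem with h | h
            · exact hx h
            · have := hsubH (Finset.mem_inter.2 ⟨h, Finset.mem_insert_self x _⟩)
              simp at this; exact hvx this.symm
          have hw := LabT.black step hxH hxy
          have hg : (⟨insert x (insert y ((G₀.clearAt v).union H).V),
              insert (y, x) ((G₀.clearAt v).union H).E, ((G₀.clearAt v).union H).L⟩ : LGraph) =
              (LGraph.clearAt ⟨insert x (insert y G₀.V), insert (y, x) G₀.E, G₀.L⟩ v).union H := by
            refine LGraph.ext' ?_ ?_ (funext fun z => rfl)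
            · show insert x (insert y (G₀.V ∪ H.V)) = insert x (insert y G₀.V) ∪ H.V
              rw [Finset.insert_union, Finset.insert_union]
            · show insert (y, x) (G₀.E ∪ H.E) = insert (y, x) G₀.E ∪ H.E
              rw [Finset.insert_union]
          rwa [hg] at hw
        · by_cases hvy : v = y
          · subst hvy
            refine ⟨Ctx.black (Ctx.commaL .hole X₀), .empty,
              NEquiv.blackCongr (NEquiv.symm (NEquiv.unitL _)), ?_,
              fun hvr => absurd hvr hvx, ?_⟩
            · show IsFmls .empty (G₀.L v)
              rw [labT_supp h1 v hv0]; exact IsFmls.empty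
            · intro Z H hZ hvH hsubH hvG
              have hcm := LabT.comma hZ h1 (by
                intro z hz; rw [Finset.mem_inter] at hz
                exact hsubH (Finset.mem_inter.2 ⟨hz.1,
                  Finset.mem_insert_of_mem (Finset.mem_insert_of_mem hz.2)⟩))
              have hxH : x ∉ (H.union G₀).V := by
                intro hmem
                rcases Finset.mem_union.1 hmem with h | h
                · have := hsubH (Finset.mem_inter.2 ⟨h, Finset.mem_insert_self x _⟩)
                  simp at this; exact hvx this.symm
                · exact hx h
              have hw := LabT.black hcm hxH hxy
              have hg : (⟨insert x (insert v (H.union G₀).V),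
                  insert (v, x) (H.union G₀).E, (H.union G₀).L⟩ : LGraph) =
                  (LGraph.clearAt ⟨insert x (insert v G₀.V), insert (v, x) G₀.E, G₀.L⟩ v).union H := by
                refine LGraph.ext' ?_ ?_ (funext fun z => ?_)
                · show insert x (insert v (H.V ∪ G₀.V)) = insert x (insert v G₀.V) ∪ H.V
                  ext z; simp [Finset.mem_insert, Finset.mem_union]; tauto
                · show insert (v, x) (H.E ∪ G₀.E) = insert (v, x) G₀.E ∪ H.E
                  ext p; simp [Finset.mem_insert, Finset.mem_union]; tauto
                · show H.L z + G₀.L z = (if z = v then 0 else G₀.L z) + H.L z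
                  by_cases hzv : z = v
                  · subst hzv; simp [labT_supp h1 _ hv0]
                  · simp only [if_neg hzv]; rw [add_comm]
              rwa [hg] at hw
          · refine ⟨Ctx.commaL .hole X₀.black, .empty, NEquiv.symm (NEquiv.unitL _), ?_,
              fun _ => TopC.commaL _ TopC.hole, ?_⟩
            · show IsFmls .empty (G₀.L v)
              rw [labT_supp h1 v hv0]; exact IsFmls.empty
            · intro Z H _ _ _ hvG
              simp at hvG
              rcases hvG with h | h | h
              exacts [absurd h hvx, absurd h hvy, absurd h hv0]

theorem union_right_comm (A B C : LGraph) :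
    (A.union B).union C = (A.union C).union B := by
  rw [union_assoc, union_comm B C, ← union_assoc]

theorem labT_rootEdgeW {r : Label} {X : NSeq} {G : LGraph} (h : LabT r X G) :
    ∀ {v : Label}, (r, v) ∈ G.E →
    ∃ (X' S : NSeq) (G' GS : LGraph),
      NEquiv X (X'.comma S.white) ∧ LabT r X' G' ∧ LabT v S GS ∧
      r ∉ GS.V ∧ r ≠ v ∧
      G'.V ∩ (insert r (insert v GS.V)) ⊆ {r} ∧
      G = G'.union ⟨insert r (insert v GS.V), insert (r, v) GS.E, GS.L⟩ := by
  induction h with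
  | empty x => intro v he; simp at he
  | fml x A => intro v he; simp at he
  | @comma x X₁ X₂ G₁ G₂ h1 h2 hsub ih1 ih2 =>
      intro v he
      rcases Finset.mem_union.1 he with he | he
      · obtain ⟨X', S, G', GS, hne₁, hX', hS, hni, hnrv, hsubB, hGeq⟩ := ih1 he
        have hsubV : G'.V ⊆ G₁.V := by
          rw [hGeq]; exact Finset.subset_union_left
        have hsubBV : insert x (insert v GS.V) ⊆ G₁.V := by
          rw [hGeq]; exact Finset.subset_union_right
        refine ⟨X'.comma X₂, S, G'.union G₂, GS, ?_, ?_, hS, hni, hnrv, ?_, ?_⟩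
        · exact NEquiv.trans (NEquiv.eL _ hne₁) (NEquiv.pull _ _ _)
        · exact LabT.comma hX' h2 (fun z hz => by
            rw [Finset.mem_inter] at hz
            exact hsub (Finset.mem_inter.2 ⟨hsubV hz.1, hz.2⟩))
        · intro z hz; rw [Finset.mem_inter] at hz
          rcases Finset.mem_union.1 hz.1 with h | h
          · exact hsubB (Finset.mem_inter.2 ⟨h, hz.2⟩)
          · exact hsub (Finset.mem_inter.2 ⟨hsubBV hz.2, h⟩)
        · rw [hGeq, union_right_comm]
      · obtain ⟨X', S, G', GS, hne₂, hX', hS, hni, hnrv, hsubB, hGeq⟩ := ih2 he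
        have hsubV : G'.V ⊆ G₂.V := by
          rw [hGeq]; exact Finset.subset_union_left
        have hsubBV : insert x (insert v GS.V) ⊆ G₂.V := by
          rw [hGeq]; exact Finset.subset_union_right
        refine ⟨X'.comma X₁, S, G'.union G₁, GS, ?_, ?_, hS, hni, hnrv, ?_, ?_⟩
        · exact NEquiv.trans (NEquiv.comm _ _) (NEquiv.trans (NEquiv.eL _ hne₂) (NEquiv.pull _ _ _))
        · exact LabT.comma hX' h1 (fun z hz => by
            rw [Finset.mem_inter] at hz
            exact hsub (Finset.mem_inter.2 ⟨hz.2, hsubV hz.1⟩))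
        · intro z hz; rw [Finset.mem_inter] at hz
          rcases Finset.mem_union.1 hz.1 with h | h
          · exact hsubB (Finset.mem_inter.2 ⟨h, hz.2⟩)
          · exact hsub (Finset.mem_inter.2 ⟨h, hsubBV hz.2⟩)
        · rw [hGeq, union_comm G₁, union_right_comm]
  | @white x y X₀ G₀ h1 hx hxy ih =>
      intro v he
      rcases Finset.mem_insert.1 he with he | he
      · have hveq : v = y := (Prod.mk.injEq _ _ _ _ ▸ he).2
        subst hveq
        refine ⟨.empty, X₀, ⟨∅, ∅, fun _ => 0⟩, G₀,
          NEquiv.symm (NEquiv.unitL _), LabT.empty x, h1, hx, hxy, by simp, ?_⟩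
        rw [emptyG_union]
      · have := (labT_edge h1 _ _ he).1
        exact absurd this hx
  | @black x y X₀ G₀ h1 hx hxy ih =>
      intro v he
      rcases Finset.mem_insert.1 he with he | he
      · have : x = y := (Prod.mk.injEq _ _ _ _ ▸ he).1
        exact absurd this hxy
      · have := (labT_edge h1 _ _ he).1
        exact absurd this hx

theorem labT_rootEdgeB {r : Label} {X : NSeq} {G : LGraph} (h : LabT r X G) :
    ∀ {v : Label}, (v, r) ∈ G.E →
    ∃ (X' S : NSeq) (G' GS : LGraph),
      NEquiv X (X'.comma S.black) ∧ LabT r X' G' ∧ LabT v S GS ∧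
      r ∉ GS.V ∧ r ≠ v ∧
      G'.V ∩ (insert r (insert v GS.V)) ⊆ {r} ∧
      G = G'.union ⟨insert r (insert v GS.V), insert (v, r) GS.E, GS.L⟩ := by
  induction h with
  | empty x => intro v he; simp at he
  | fml x A => intro v he; simp at he
  | @comma x X₁ X₂ G₁ G₂ h1 h2 hsub ih1 ih2 =>
      intro v he
      rcases Finset.mem_union.1 he with he | he
      · obtain ⟨X', S, G', GS, hne₁, hX', hS, hni, hnrv, hsubB, hGeq⟩ := ih1 he
        have hsubV : G'.V ⊆ G₁.V := by
          rw [hGeq]; exact Finset.subset_union_left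
        have hsubBV : insert x (insert v GS.V) ⊆ G₁.V := by
          rw [hGeq]; exact Finset.subset_union_right
        refine ⟨X'.comma X₂, S, G'.union G₂, GS, ?_, ?_, hS, hni, hnrv, ?_, ?_⟩
        · exact NEquiv.trans (NEquiv.eL _ hne₁) (NEquiv.pull _ _ _)
        · exact LabT.comma hX' h2 (fun z hz => by
            rw [Finset.mem_inter] at hz
            exact hsub (Finset.mem_inter.2 ⟨hsubV hz.1, hz.2⟩))
        · intro z hz; rw [Finset.mem_inter] at hz
          rcases Finset.mem_union.1 hz.1 with h | h
          · exact hsubB (Finset.mem_inter.2 ⟨h, hz.2⟩)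
          · exact hsub (Finset.mem_inter.2 ⟨hsubBV hz.2, h⟩)
        · rw [hGeq, union_right_comm]
      · obtain ⟨X', S, G', GS, hne₂, hX', hS, hni, hnrv, hsubB, hGeq⟩ := ih2 he
        have hsubV : G'.V ⊆ G₂.V := by
          rw [hGeq]; exact Finset.subset_union_left
        have hsubBV : insert x (insert v GS.V) ⊆ G₂.V := by
          rw [hGeq]; exact Finset.subset_union_right
        refine ⟨X'.comma X₁, S, G'.union G₁, GS, ?_, ?_, hS, hni, hnrv, ?_, ?_⟩
        · exact NEquiv.trans (NEquiv.comm _ _) (NEquiv.trans (NEquiv.eL _ hne₂) (NEquiv.pull _ _ _))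
        · exact LabT.comma hX' h1 (fun z hz => by
            rw [Finset.mem_inter] at hz
            exact hsub (Finset.mem_inter.2 ⟨hz.2, hsubV hz.1⟩))
        · intro z hz; rw [Finset.mem_inter] at hz
          rcases Finset.mem_union.1 hz.1 with h | h
          · exact hsubB (Finset.mem_inter.2 ⟨h, hz.2⟩)
          · exact hsub (Finset.mem_inter.2 ⟨h, hsubBV hz.2⟩)
        · rw [hGeq, union_comm G₁, union_right_comm]
  | @white x y X₀ G₀ h1 hx hxy ih =>
      intro v he
      rcases Finset.mem_insert.1 he with he | he
      · have : x = y := (Prod.mk.injEq _ _ _ _ ▸ he).2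
        exact absurd this hxy
      · have := (labT_edge h1 _ _ he).2.1
        exact absurd this hx
  | @black x y X₀ G₀ h1 hx hxy ih =>
      intro v he
      rcases Finset.mem_insert.1 he with he | he
      · have hveq : v = y := (Prod.mk.injEq _ _ _ _ ▸ he).1
        subst hveq
        refine ⟨.empty, X₀, ⟨∅, ∅, fun _ => 0⟩, G₀,
          NEquiv.symm (NEquiv.unitL _), LabT.empty x, h1, hx, hxy, by simp, ?_⟩
        rw [emptyG_union]
      · have := (labT_edge h1 _ _ he).2.1
        exact absurd this hx

theorem NEquiv.perm4 (a w f s : NSeq) :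
    NEquiv ((a.comma w).comma (f.comma s)) ((f.comma w).comma (a.comma s)) :=
  calc (a.comma w).comma (f.comma s)
      =~ a.comma (w.comma (f.comma s)) := NEquiv.assoc _ _ _
    _ =~ a.comma (f.comma (w.comma s)) := NEquiv.eR _ (NEquiv.swap _ _ _)
    _ =~ f.comma (a.comma (w.comma s)) := NEquiv.swap _ _ _
    _ =~ f.comma (w.comma (a.comma s)) := NEquiv.eR _ (NEquiv.swap _ _ _)
    _ =~ (f.comma w).comma (a.comma s) := NEquiv.symm (NEquiv.assoc _ _ _)

theorem NEquiv.perm4b (x y z t : NSeq) :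
    NEquiv ((x.comma y).comma (z.comma t)) ((x.comma z).comma (t.comma y)) :=
  calc (x.comma y).comma (z.comma t)
      =~ x.comma (y.comma (z.comma t)) := NEquiv.assoc _ _ _
    _ =~ x.comma (z.comma (y.comma t)) := NEquiv.eR _ (NEquiv.swap _ _ _)
    _ =~ x.comma (z.comma (t.comma y)) := NEquiv.eR _ (NEquiv.eR _ (NEquiv.comm _ _))
    _ =~ (x.comma z).comma (t.comma y) := NEquiv.symm (NEquiv.assoc _ _ _)

theorem addF_union_left (G₁ G₂ : LGraph) (v : Label) (B : Formula) :
    (G₁.addF v B).union G₂ = (G₁.union G₂).addF v B := by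
  refine LGraph.ext' rfl rfl (funext fun z => ?_)
  show (if z = v then B ::ₘ G₁.L z else G₁.L z) + G₂.L z =
    if z = v then B ::ₘ (G₁.L z + G₂.L z) else G₁.L z + G₂.L z
  by_cases hzv : z = v <;> simp [hzv, Multiset.cons_add]

theorem addF_union_right (G₁ G₂ : LGraph) (v : Label) (B : Formula) :
    G₁.union (G₂.addF v B) = (G₁.union G₂).addF v B := by
  rw [union_comm, addF_union_left, union_comm G₂ G₁]

/-- Extract a formula at the root, keeping a syntactic `LabT` witness. -/
theorem labT_take {x : Label} {X : NSeq} {G : LGraph} (h : LabT x X G)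
    {F : Formula} (hf : F ∈ G.L x) :
    ∃ S : NSeq, NEquiv X ((NSeq.fml F).comma S) ∧ LabT x ((NSeq.fml F).comma S) G := by
  obtain ⟨C, Y, he, hfml, ht, hins⟩ := labT_at h x
  obtain ⟨Y', heY, hfY'⟩ := isFmls_extract hfml hf
  have hxV : x ∈ G.V := by
    by_contra hxV
    rw [labT_supp h x hxV] at hf
    simp at hf
  obtain ⟨W, hW, hlY'⟩ := isFmls_labT hfY' x
  have hZ : LabT x ((NSeq.fml F).comma Y') ⟨{x}, ∅, fun z => if z = x then G.L x else 0⟩ := by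
    have hcm := LabT.comma (LabT.fml x F) hlY' (fun z hz => (Finset.mem_inter.1 hz).1)
    have hg : (LGraph.union ⟨{x}, ∅, fun z => if z = x then ({F} : Multiset Formula) else 0⟩
        ⟨W, ∅, fun z => if z = x then (G.L x).erase F else 0⟩) =
        ⟨{x}, ∅, fun z => if z = x then G.L x else 0⟩ := by
      refine LGraph.ext' ?_ (by simp [LGraph.union]) (funext fun z => ?_)
      · show {x} ∪ W = {x}
        ext w; simp; intro hw; simpa using hW hw
      · show (if z = x then {F} else 0) + (if z = x then (G.L x).erase F else 0) = _
        by_cases hz : z = x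
        · simp [hz, Multiset.singleton_add, Multiset.cons_erase hf]
        · simp [hz]
    rwa [hg] at hcm
  have step := hins ((NSeq.fml F).comma Y') _ hZ (by simp) (by
    intro z hz
    have := (Finset.mem_inter.1 hz).1
    simpa using this) hxV
  have hg2 : (G.clearAt x).union ⟨{x}, ∅, fun z => if z = x then G.L x else 0⟩ = G := by
    refine LGraph.ext' ?_ (by simp [LGraph.union, LGraph.clearAt]) (funext fun z => ?_)
    · show G.V ∪ {x} = G.V
      ext w; simp; rintro rfl; exact hxV
    · show (if z = x then 0 else G.L z) + (if z = x then G.L x else 0) = G.L z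
      by_cases hz : z = x <;> simp [hz]
  rw [hg2] at step
  refine ⟨Y'.comma (C.fill .empty), ?_, ?_⟩
  · calc X =~ C.fill Y := he
      _ =~ Y.comma (C.fill .empty) := topC_fill (ht rfl) Y
      _ =~ ((NSeq.fml F).comma Y').comma (C.fill .empty) := NEquiv.eL _ heY
      _ =~ (NSeq.fml F).comma (Y'.comma (C.fill .empty)) := NEquiv.assoc _ _ _
  · refine labT_equiv ?_ step
    calc C.fill ((NSeq.fml F).comma Y')
        =~ ((NSeq.fml F).comma Y').comma (C.fill .empty) := topC_fill (ht rfl) _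
      _ =~ (NSeq.fml F).comma (Y'.comma (C.fill .empty)) := NEquiv.assoc _ _ _

theorem labT_diaDecomp {r : Label} {X : NSeq} {G : LGraph} (h : LabT r X G) :
    ∀ {u v : Label} {F : Formula}, (u, v) ∈ G.E → F ∈ G.L u →
    ∃ (C : Ctx) (S : NSeq),
      (NEquiv X (C.fill ((NSeq.fml F).comma S.white)) ∧
        ∀ B, LabT r (C.fill ((NSeq.fml F).comma (((NSeq.fml B).comma S).white))) (G.addF v B))
      ∨
      (NEquiv X (C.fill (((NSeq.fml F).comma S).black)) ∧
        ∀ B, LabT r (C.fill ((NSeq.fml B).comma (((NSeq.fml F).comma S).black))) (G.addF v B)) := by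
  induction h with
  | empty x => intro u v F he hf; simp at he
  | fml x A => intro u v F he hf; simp at he
  | @comma x X₁ X₂ G₁ G₂ h1 h2 hsub ih1 ih2 =>
      intro u v F he hf
      rcases Finset.mem_union.1 he with he | he
      · by_cases hf1 : F ∈ G₁.L u
        · obtain ⟨C₁, S, hd⟩ := ih1 he hf1
          refine ⟨Ctx.commaL C₁ X₂, S, ?_⟩
          rcases hd with ⟨hne₁, hins⟩ | ⟨hne₁, hins⟩
          · refine Or.inl ⟨NEquiv.eL _ hne₁, fun B => ?_⟩
            have := LabT.comma (hins B) h2 (by exact hsub)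
            rwa [addF_union_left] at this
          · refine Or.inr ⟨NEquiv.eL _ hne₁, fun B => ?_⟩
            have := LabT.comma (hins B) h2 (by exact hsub)
            rwa [addF_union_left] at this
        · -- F lives in G₂ at the root
          have hf2 : F ∈ G₂.L u := by
            rcases Multiset.mem_add.1 hf with h | h
            · exact absurd h hf1
            · exact h
          have hu1 : u ∈ G₁.V := (labT_edge h1 _ _ he).1
          have hu2 : u ∈ G₂.V := by
            by_contra hc
            rw [labT_supp h2 u hc] at hf2; simp at hf2
          have hux : u = x := by
            have := hsub (Finset.mem_inter.2 ⟨hu1, hu2⟩); simpa using this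
          subst hux
          obtain ⟨X₁', S₀, G₁', GS, hne₁, hX', hS, hni, hnuv, hsubB, hGeq⟩ := labT_rootEdgeW h1 he
          obtain ⟨S₂, he₂, hl₂⟩ := labT_take h2 hf2
          refine ⟨Ctx.commaL Ctx.hole (X₁'.comma S₂), S₀, Or.inl ⟨?_, ?_⟩⟩
          · calc X₁.comma X₂
                =~ (X₁'.comma S₀.white).comma ((NSeq.fml F).comma S₂) :=
                  NEquiv.commaCongr hne₁ he₂
              _ =~ ((NSeq.fml F).comma S₀.white).comma (X₁'.comma S₂) := NEquiv.perm4 _ _ _ _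
          · intro B
            have hbr1 : LabT v ((NSeq.fml B).comma S₀)
                (LGraph.union ⟨{v}, ∅, fun z => if z = v then {B} else 0⟩ GS) :=
              LabT.comma (LabT.fml v B) hS (fun z hz => (Finset.mem_inter.1 hz).1)
            have hbr2 := LabT.white hbr1 (by
                intro hc
                rcases Finset.mem_union.1 hc with hc | hc
                · simp at hc; exact hnuv hc
                · exact hni hc) hnuv
            have hvG1 : insert u (insert v GS.V) ⊆ G₁.V := by
              rw [hGeq]; exact Finset.subset_union_right
            have hcm1 := LabT.comma hbr2 hX' (by
              intro z hz; rw [Finset.mem_inter] at hz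
              obtain ⟨hzl, hzr⟩ := hz
              have hz' : z ∈ insert u (insert v GS.V) := by
                simp [LGraph.union] at hzl ⊢; tauto
              have := hsubB (Finset.mem_inter.2 ⟨hzr, hz'⟩)
              simpa using this)
            have hcm2 := LabT.comma hl₂ hcm1 (by
              intro z hz; rw [Finset.mem_inter] at hz
              obtain ⟨hz2, hzbr⟩ := hz
              have hzG1 : z ∈ G₁.V := by
                rcases Finset.mem_union.1 hzbr with hzb | hzg
                · apply hvG1
                  simp [LGraph.union] at hzb ⊢; tauto
                · rw [hGeq]; exact Finset.mem_union.2 (Or.inl hzg)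
              exact hsub (Finset.mem_inter.2 ⟨hzG1, hz2⟩))
            refine labT_equiv (NEquiv.perm4b _ _ _ _) ?_
            convert hcm2 using 1
            refine LGraph.ext' ?_ ?_ (funext fun z => ?_)
            · ext w
              simp [hGeq, LGraph.union, LGraph.addF, Finset.mem_union, Finset.mem_insert]
              tauto
            · ext p
              simp [hGeq, LGraph.union, LGraph.addF, Finset.mem_union, Finset.mem_insert]
              tauto
            · simp only [hGeq, LGraph.union, LGraph.addF]
              by_cases hzv : z = v
              · simp only [if_pos hzv, ← Multiset.singleton_add]; abel
              · simp only [if_neg hzv, zero_add]; abel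
      · by_cases hf2 : F ∈ G₂.L u
        · obtain ⟨C₂, S, hd⟩ := ih2 he hf2
          refine ⟨Ctx.commaL C₂ X₁, S, ?_⟩
          rcases hd with ⟨hne₂, hins⟩ | ⟨hne₂, hins⟩
          · refine Or.inl ⟨(NEquiv.comm _ _).trans (NEquiv.eL _ hne₂), fun B => ?_⟩
            have := LabT.comma (hins B) h1 (by
              intro z hz; rw [Finset.mem_inter] at hz
              exact hsub (Finset.mem_inter.2 ⟨hz.2, hz.1⟩))
            rwa [addF_union_left, union_comm G₂ G₁] at this
          · refine Or.inr ⟨(NEquiv.comm _ _).trans (NEquiv.eL _ hne₂), fun B => ?_⟩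
            have := LabT.comma (hins B) h1 (by
              intro z hz; rw [Finset.mem_inter] at hz
              exact hsub (Finset.mem_inter.2 ⟨hz.2, hz.1⟩))
            rwa [addF_union_left, union_comm G₂ G₁] at this
        · have hf1 : F ∈ G₁.L u := by
            rcases Multiset.mem_add.1 hf with h | h
            · exact h
            · exact absurd h hf2
          have hu2 : u ∈ G₂.V := (labT_edge h2 _ _ he).1
          have hu1 : u ∈ G₁.V := by
            by_contra hc
            rw [labT_supp h1 u hc] at hf1; simp at hf1
          have hux : u = x := by
            have := hsub (Finset.mem_inter.2 ⟨hu1, hu2⟩); simpa using this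
          subst hux
          obtain ⟨X₂', S₀, G₂', GS, hne₂, hX', hS, hni, hnuv, hsubB, hGeq⟩ := labT_rootEdgeW h2 he
          obtain ⟨S₁, he₁, hl₁⟩ := labT_take h1 hf1
          refine ⟨Ctx.commaL Ctx.hole (X₂'.comma S₁), S₀, Or.inl ⟨?_, ?_⟩⟩
          · calc X₁.comma X₂
                =~ ((NSeq.fml F).comma S₁).comma (X₂'.comma S₀.white) :=
                  NEquiv.commaCongr he₁ hne₂
              _ =~ ((NSeq.fml F).comma (X₂'.comma S₀.white)).comma S₁ := NEquiv.pull _ _ _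
              _ =~ ((NSeq.fml F).comma (S₀.white.comma X₂')).comma S₁ :=
                  NEquiv.eL _ (NEquiv.eR _ (NEquiv.comm _ _))
              _ =~ (((NSeq.fml F).comma S₀.white).comma X₂').comma S₁ :=
                  NEquiv.eL _ (NEquiv.symm (NEquiv.assoc _ _ _))
              _ =~ ((NSeq.fml F).comma S₀.white).comma (X₂'.comma S₁) := NEquiv.assoc _ _ _
          · intro B
            have hbr1 : LabT v ((NSeq.fml B).comma S₀)
                (LGraph.union ⟨{v}, ∅, fun z => if z = v then {B} else 0⟩ GS) :=
              LabT.comma (LabT.fml v B) hS (fun z hz => (Finset.mem_inter.1 hz).1)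
            have hbr2 := LabT.white hbr1 (by
                intro hc
                rcases Finset.mem_union.1 hc with hc | hc
                · simp at hc; exact hnuv hc
                · exact hni hc) hnuv
            have hvG2 : insert u (insert v GS.V) ⊆ G₂.V := by
              rw [hGeq]; exact Finset.subset_union_right
            have hcm1 := LabT.comma hbr2 hX' (by
              intro z hz; rw [Finset.mem_inter] at hz
              obtain ⟨hzl, hzr⟩ := hz
              have hz' : z ∈ insert u (insert v GS.V) := by
                simp [LGraph.union] at hzl ⊢; tauto
              have := hsubB (Finset.mem_inter.2 ⟨hzr, hz'⟩)
              simpa using this)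
            have hcm2 := LabT.comma hl₁ hcm1 (by
              intro z hz; rw [Finset.mem_inter] at hz
              obtain ⟨hz1, hzbr⟩ := hz
              have hzG2 : z ∈ G₂.V := by
                rcases Finset.mem_union.1 hzbr with hzb | hzg
                · apply hvG2
                  simp [LGraph.union] at hzb ⊢; tauto
                · rw [hGeq]; exact Finset.mem_union.2 (Or.inl hzg)
              exact hsub (Finset.mem_inter.2 ⟨hz1, hzG2⟩))
            refine labT_equiv (NEquiv.perm4b _ _ _ _) ?_
            convert hcm2 using 1
            refine LGraph.ext' ?_ ?_ (funext fun z => ?_)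
            · ext w
              simp [hGeq, LGraph.union, LGraph.addF, Finset.mem_union, Finset.mem_insert]
              tauto
            · ext p
              simp [hGeq, LGraph.union, LGraph.addF, Finset.mem_union, Finset.mem_insert]
              tauto
            · simp only [hGeq, LGraph.union, LGraph.addF]
              by_cases hzv : z = v
              · simp only [if_pos hzv, ← Multiset.singleton_add]; abel
              · simp only [if_neg hzv, zero_add]; abel
  | @white x y X₀ G₀ h1 hx hxy ih =>
      intro u v F he hf
      rcases Finset.mem_insert.1 he with he | he
      · obtain ⟨hu, hv⟩ := Prod.mk.injEq _ _ _ _ ▸ he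
        subst hu
        have hf' : F ∈ G₀.L u := hf
        rw [labT_supp h1 u hx] at hf'
        simp at hf'
      · have hfu : F ∈ G₀.L u := hf
        obtain ⟨C₀, S, hd⟩ := ih he hfu
        refine ⟨Ctx.white C₀, S, ?_⟩
        rcases hd with ⟨hne₀, hins⟩ | ⟨hne₀, hins⟩
        · exact Or.inl ⟨NEquiv.whiteCongr hne₀, fun B => LabT.white (hins B) hx hxy⟩
        · exact Or.inr ⟨NEquiv.whiteCongr hne₀, fun B => LabT.white (hins B) hx hxy⟩
  | @black x y X₀ G₀ h1 hx hxy ih =>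
      intro u v F he hf
      rcases Finset.mem_insert.1 he with he | he
      · obtain ⟨hu, hv⟩ := Prod.mk.injEq _ _ _ _ ▸ he
        subst hu; subst hv
        have hfu : F ∈ G₀.L u := hf
        obtain ⟨S, heS, hlS⟩ := labT_take h1 hfu
        refine ⟨Ctx.hole, S, Or.inr ⟨NEquiv.blackCongr heS, ?_⟩⟩
        intro B
        have hb := LabT.black hlS hx hxy
        have hcm := LabT.comma (LabT.fml v B) hb (fun z hz => (Finset.mem_inter.1 hz).1)
        have hg : (LGraph.union ⟨{v}, ∅, fun z => if z = v then ({B} : Multiset Formula) else 0⟩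
            ⟨insert v (insert u G₀.V), insert (u, v) G₀.E, G₀.L⟩) =
            LGraph.addF ⟨insert v (insert u G₀.V), insert (u, v) G₀.E, G₀.L⟩ v B := by
          refine LGraph.ext' ?_ (by simp [LGraph.union, LGraph.addF]) (funext fun z => ?_)
          · show {v} ∪ insert v (insert u G₀.V) = insert v (insert u G₀.V)
            ext w; simp; tauto
          · show (if z = v then ({B} : Multiset Formula) else 0) + G₀.L z =
              if z = v then B ::ₘ G₀.L z else G₀.L z
            by_cases hz : z = v <;> simp [hz, Multiset.singleton_add]
        rwa [hg] at hcm
      · have hfu : F ∈ G₀.L u := hf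
        obtain ⟨C₀, S, hd⟩ := ih he hfu
        refine ⟨Ctx.black C₀, S, ?_⟩
        rcases hd with ⟨hne₀, hins⟩ | ⟨hne₀, hins⟩
        · exact Or.inl ⟨NEquiv.blackCongr hne₀, fun B => LabT.black (hins B) hx hxy⟩
        · exact Or.inr ⟨NEquiv.blackCongr hne₀, fun B => LabT.black (hins B) hx hxy⟩

theorem labT_bdiaDecomp {r : Label} {X : NSeq} {G : LGraph} (h : LabT r X G) :
    ∀ {u v : Label} {F : Formula}, (u, v) ∈ G.E → F ∈ G.L v →
    ∃ (C : Ctx) (S : NSeq),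
      (NEquiv X (C.fill (((NSeq.fml F).comma S).white)) ∧
        ∀ B, LabT r (C.fill ((NSeq.fml B).comma (((NSeq.fml F).comma S).white))) (G.addF u B))
      ∨
      (NEquiv X (C.fill ((NSeq.fml F).comma S.black)) ∧
        ∀ B, LabT r (C.fill ((NSeq.fml F).comma (((NSeq.fml B).comma S).black))) (G.addF u B)) := by
  induction h with
  | empty x => intro u v F he hf; simp at he
  | fml x A => intro u v F he hf; simp at he
  | @comma x X₁ X₂ G₁ G₂ h1 h2 hsub ih1 ih2 =>
      intro u v F he hf
      rcases Finset.mem_union.1 he with he | he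
      · by_cases hf1 : F ∈ G₁.L v
        · obtain ⟨C₁, S, hd⟩ := ih1 he hf1
          refine ⟨Ctx.commaL C₁ X₂, S, ?_⟩
          rcases hd with ⟨hne₁, hins⟩ | ⟨hne₁, hins⟩
          · refine Or.inl ⟨NEquiv.eL _ hne₁, fun B => ?_⟩
            have := LabT.comma (hins B) h2 (by exact hsub)
            rwa [addF_union_left] at this
          · refine Or.inr ⟨NEquiv.eL _ hne₁, fun B => ?_⟩
            have := LabT.comma (hins B) h2 (by exact hsub)
            rwa [addF_union_left] at this
        · have hf2 : F ∈ G₂.L v := by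
            rcases Multiset.mem_add.1 hf with h | h
            · exact absurd h hf1
            · exact h
          have hv1 : v ∈ G₁.V := (labT_edge h1 _ _ he).2.1
          have hv2 : v ∈ G₂.V := by
            by_contra hc
            rw [labT_supp h2 v hc] at hf2; simp at hf2
          have hvx : v = x := by
            have := hsub (Finset.mem_inter.2 ⟨hv1, hv2⟩); simpa using this
          subst hvx
          obtain ⟨X₁', S₀, G₁', GS, hne₁, hX', hS, hni, hnvu, hsubB, hGeq⟩ := labT_rootEdgeB h1 he
          obtain ⟨S₂, he₂, hl₂⟩ := labT_take h2 hf2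
          refine ⟨Ctx.commaL Ctx.hole (X₁'.comma S₂), S₀, Or.inr ⟨?_, ?_⟩⟩
          · calc X₁.comma X₂
                =~ (X₁'.comma S₀.black).comma ((NSeq.fml F).comma S₂) :=
                  NEquiv.commaCongr hne₁ he₂
              _ =~ ((NSeq.fml F).comma S₀.black).comma (X₁'.comma S₂) := NEquiv.perm4 _ _ _ _
          · intro B
            have hbr1 : LabT u ((NSeq.fml B).comma S₀)
                (LGraph.union ⟨{u}, ∅, fun z => if z = u then {B} else 0⟩ GS) :=
              LabT.comma (LabT.fml u B) hS (fun z hz => (Finset.mem_inter.1 hz).1)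
            have hbr2 := LabT.black hbr1 (by
                intro hc
                rcases Finset.mem_union.1 hc with hc | hc
                · simp at hc; exact hnvu hc
                · exact hni hc) hnvu
            have hvG1 : insert v (insert u GS.V) ⊆ G₁.V := by
              rw [hGeq]; exact Finset.subset_union_right
            have hcm1 := LabT.comma hbr2 hX' (by
              intro z hz; rw [Finset.mem_inter] at hz
              obtain ⟨hzl, hzr⟩ := hz
              have hz' : z ∈ insert v (insert u GS.V) := by
                simp [LGraph.union] at hzl ⊢; tauto
              have := hsubB (Finset.mem_inter.2 ⟨hzr, hz'⟩)
              simpa using this)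
            have hcm2 := LabT.comma hl₂ hcm1 (by
              intro z hz; rw [Finset.mem_inter] at hz
              obtain ⟨hz2, hzbr⟩ := hz
              have hzG1 : z ∈ G₁.V := by
                rcases Finset.mem_union.1 hzbr with hzb | hzg
                · apply hvG1
                  simp [LGraph.union] at hzb ⊢; tauto
                · rw [hGeq]; exact Finset.mem_union.2 (Or.inl hzg)
              exact hsub (Finset.mem_inter.2 ⟨hzG1, hz2⟩))
            refine labT_equiv (NEquiv.perm4b _ _ _ _) ?_
            convert hcm2 using 1
            refine LGraph.ext' ?_ ?_ (funext fun z => ?_)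
            · ext w
              simp [hGeq, LGraph.union, LGraph.addF, Finset.mem_union, Finset.mem_insert]
              tauto
            · ext p
              simp [hGeq, LGraph.union, LGraph.addF, Finset.mem_union, Finset.mem_insert]
              tauto
            · simp only [hGeq, LGraph.union, LGraph.addF]
              by_cases hzu : z = u
              · simp only [if_pos hzu, ← Multiset.singleton_add]; abel
              · simp only [if_neg hzu, zero_add]; abel
      · by_cases hf2 : F ∈ G₂.L v
        · obtain ⟨C₂, S, hd⟩ := ih2 he hf2
          refine ⟨Ctx.commaL C₂ X₁, S, ?_⟩
          rcases hd with ⟨hne₂, hins⟩ | ⟨hne₂, hins⟩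
          · refine Or.inl ⟨(NEquiv.comm _ _).trans (NEquiv.eL _ hne₂), fun B => ?_⟩
            have := LabT.comma (hins B) h1 (by
              intro z hz; rw [Finset.mem_inter] at hz
              exact hsub (Finset.mem_inter.2 ⟨hz.2, hz.1⟩))
            rwa [addF_union_left, union_comm G₂ G₁] at this
          · refine Or.inr ⟨(NEquiv.comm _ _).trans (NEquiv.eL _ hne₂), fun B => ?_⟩
            have := LabT.comma (hins B) h1 (by
              intro z hz; rw [Finset.mem_inter] at hz
              exact hsub (Finset.mem_inter.2 ⟨hz.2, hz.1⟩))
            rwa [addF_union_left, union_comm G₂ G₁] at this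
        · have hf1 : F ∈ G₁.L v := by
            rcases Multiset.mem_add.1 hf with h | h
            · exact h
            · exact absurd h hf2
          have hv2 : v ∈ G₂.V := (labT_edge h2 _ _ he).2.1
          have hv1 : v ∈ G₁.V := by
            by_contra hc
            rw [labT_supp h1 v hc] at hf1; simp at hf1
          have hvx : v = x := by
            have := hsub (Finset.mem_inter.2 ⟨hv1, hv2⟩); simpa using this
          subst hvx
          obtain ⟨X₂', S₀, G₂', GS, hne₂, hX', hS, hni, hnvu, hsubB, hGeq⟩ := labT_rootEdgeB h2 he
          obtain ⟨S₁, he₁, hl₁⟩ := labT_take h1 hf1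
          refine ⟨Ctx.commaL Ctx.hole (X₂'.comma S₁), S₀, Or.inr ⟨?_, ?_⟩⟩
          · calc X₁.comma X₂
                =~ ((NSeq.fml F).comma S₁).comma (X₂'.comma S₀.black) :=
                  NEquiv.commaCongr he₁ hne₂
              _ =~ ((NSeq.fml F).comma (X₂'.comma S₀.black)).comma S₁ := NEquiv.pull _ _ _
              _ =~ ((NSeq.fml F).comma (S₀.black.comma X₂')).comma S₁ :=
                  NEquiv.eL _ (NEquiv.eR _ (NEquiv.comm _ _))
              _ =~ (((NSeq.fml F).comma S₀.black).comma X₂').comma S₁ :=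
                  NEquiv.eL _ (NEquiv.symm (NEquiv.assoc _ _ _))
              _ =~ ((NSeq.fml F).comma S₀.black).comma (X₂'.comma S₁) := NEquiv.assoc _ _ _
          · intro B
            have hbr1 : LabT u ((NSeq.fml B).comma S₀)
                (LGraph.union ⟨{u}, ∅, fun z => if z = u then {B} else 0⟩ GS) :=
              LabT.comma (LabT.fml u B) hS (fun z hz => (Finset.mem_inter.1 hz).1)
            have hbr2 := LabT.black hbr1 (by
                intro hc
                rcases Finset.mem_union.1 hc with hc | hc
                · simp at hc; exact hnvu hc
                · exact hni hc) hnvu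
            have hvG2 : insert v (insert u GS.V) ⊆ G₂.V := by
              rw [hGeq]; exact Finset.subset_union_right
            have hcm1 := LabT.comma hbr2 hX' (by
              intro z hz; rw [Finset.mem_inter] at hz
              obtain ⟨hzl, hzr⟩ := hz
              have hz' : z ∈ insert v (insert u GS.V) := by
                simp [LGraph.union] at hzl ⊢; tauto
              have := hsubB (Finset.mem_inter.2 ⟨hzr, hz'⟩)
              simpa using this)
            have hcm2 := LabT.comma hl₁ hcm1 (by
              intro z hz; rw [Finset.mem_inter] at hz
              obtain ⟨hz1, hzbr⟩ := hz
              have hzG2 : z ∈ G₂.V := by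
                rcases Finset.mem_union.1 hzbr with hzb | hzg
                · apply hvG2
                  simp [LGraph.union] at hzb ⊢; tauto
                · rw [hGeq]; exact Finset.mem_union.2 (Or.inl hzg)
              exact hsub (Finset.mem_inter.2 ⟨hz1, hzG2⟩))
            refine labT_equiv (NEquiv.perm4b _ _ _ _) ?_
            convert hcm2 using 1
            refine LGraph.ext' ?_ ?_ (funext fun z => ?_)
            · ext w
              simp [hGeq, LGraph.union, LGraph.addF, Finset.mem_union, Finset.mem_insert]
              tauto
            · ext p
              simp [hGeq, LGraph.union, LGraph.addF, Finset.mem_union, Finset.mem_insert]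
              tauto
            · simp only [hGeq, LGraph.union, LGraph.addF]
              by_cases hzu : z = u
              · simp only [if_pos hzu, ← Multiset.singleton_add]; abel
              · simp only [if_neg hzu, zero_add]; abel
  | @white x y X₀ G₀ h1 hx hxy ih =>
      intro u v F he hf
      rcases Finset.mem_insert.1 he with he | he
      · obtain ⟨hu, hv⟩ := Prod.mk.injEq _ _ _ _ ▸ he
        subst hu; subst hv
        have hfv : F ∈ G₀.L v := hf
        obtain ⟨S, heS, hlS⟩ := labT_take h1 hfv
        refine ⟨Ctx.hole, S, Or.inl ⟨NEquiv.whiteCongr heS, ?_⟩⟩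
        intro B
        have hb := LabT.white hlS hx hxy
        have hcm := LabT.comma (LabT.fml u B) hb (fun z hz => (Finset.mem_inter.1 hz).1)
        have hg : (LGraph.union ⟨{u}, ∅, fun z => if z = u then ({B} : Multiset Formula) else 0⟩
            ⟨insert u (insert v G₀.V), insert (u, v) G₀.E, G₀.L⟩) =
            LGraph.addF ⟨insert u (insert v G₀.V), insert (u, v) G₀.E, G₀.L⟩ u B := by
          refine LGraph.ext' ?_ (by simp [LGraph.union, LGraph.addF]) (funext fun z => ?_)
          · show {u} ∪ insert u (insert v G₀.V) = insert u (insert v G₀.V)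
            ext w; simp; tauto
          · show (if z = u then ({B} : Multiset Formula) else 0) + G₀.L z =
              if z = u then B ::ₘ G₀.L z else G₀.L z
            by_cases hz : z = u <;> simp [hz, Multiset.singleton_add]
        rwa [hg] at hcm
      · have hfv : F ∈ G₀.L v := hf
        obtain ⟨C₀, S, hd⟩ := ih he hfv
        refine ⟨Ctx.white C₀, S, ?_⟩
        rcases hd with ⟨hne₀, hins⟩ | ⟨hne₀, hins⟩
        · exact Or.inl ⟨NEquiv.whiteCongr hne₀, fun B => LabT.white (hins B) hx hxy⟩
        · exact Or.inr ⟨NEquiv.whiteCongr hne₀, fun B => LabT.white (hins B) hx hxy⟩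
  | @black x y X₀ G₀ h1 hx hxy ih =>
      intro u v F he hf
      rcases Finset.mem_insert.1 he with he | he
      · obtain ⟨hu, hv⟩ := Prod.mk.injEq _ _ _ _ ▸ he
        subst hv
        have hf' : F ∈ G₀.L v := hf
        rw [labT_supp h1 v hx] at hf'
        simp at hf'
      · have hfv : F ∈ G₀.L v := hf
        obtain ⟨C₀, S, hd⟩ := ih he hfv
        refine ⟨Ctx.black C₀, S, ?_⟩
        rcases hd with ⟨hne₀, hins⟩ | ⟨hne₀, hins⟩
        · exact Or.inl ⟨NEquiv.blackCongr hne₀, fun B => LabT.black (hins B) hx hxy⟩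
        · exact Or.inr ⟨NEquiv.blackCongr hne₀, fun B => LabT.black (hins B) hx hxy⟩

theorem toLGraph_L_cons (R : RelSet) (x : Label) (A : Formula)
    (Γ : Multiset (Label × Formula)) (z : Label) :
    (toLGraph R ((x, A) ::ₘ Γ)).L z =
      if x = z then A ::ₘ (toLGraph R Γ).L z else (toLGraph R Γ).L z := by
  show ((((x, A) ::ₘ Γ).filter fun p => p.1 = z).map Prod.snd) = _
  rw [Multiset.filter_cons]
  by_cases hxz : x = z
  · simp [hxz, Multiset.singleton_add, toLGraph]
  · simp [hxz, toLGraph]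

theorem toLGraph_V_cons (R : RelSet) (x : Label) (A : Formula)
    (Γ : Multiset (Label × Formula)) :
    (toLGraph R ((x, A) ::ₘ Γ)).V = insert x ((toLGraph R Γ).V) := by
  show R.image Prod.fst ∪ R.image Prod.snd ∪ (((x, A) ::ₘ Γ).map Prod.fst).toFinset = _
  rw [Multiset.map_cons, Multiset.toFinset_cons]
  ext z
  simp [toLGraph, Finset.mem_union, Finset.mem_insert]

theorem mem_toLGraph_V {R : RelSet} {Γ : Multiset (Label × Formula)} {z : Label} :
    z ∈ (toLGraph R Γ).V ↔ occursLS z (R, Γ) := by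
  show z ∈ R.image Prod.fst ∪ R.image Prod.snd ∪ (Γ.map Prod.fst).toFinset ↔ _
  simp only [occursLS, Finset.mem_union, Finset.mem_image, Multiset.mem_toFinset,
    Multiset.mem_map]
  constructor
  · rintro ((⟨⟨a, b⟩, hab, rfl⟩ | ⟨⟨a, b⟩, hab, rfl⟩) | ⟨⟨a, b⟩, hab, rfl⟩)
    · exact Or.inl ⟨b, Or.inl hab⟩
    · exact Or.inl ⟨a, Or.inr hab⟩
    · exact Or.inr ⟨b, hab⟩
  · rintro (⟨w, hw | hw⟩ | ⟨A, hA⟩)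
    · exact Or.inl (Or.inl ⟨(z, w), hw, rfl⟩)
    · exact Or.inl (Or.inr ⟨(w, z), hw, rfl⟩)
    · exact Or.inr ⟨(z, A), hA, rfl⟩

theorem toLGraph_L_zero {R : RelSet} {Γ : Multiset (Label × Formula)} {z : Label}
    (h : ∀ A, (z, A) ∉ Γ) : (toLGraph R Γ).L z = 0 := by
  show ((Γ.filter fun p => p.1 = z).map Prod.snd) = 0
  rw [Multiset.map_eq_zero, Multiset.filter_eq_nil]
  intro a ha haz
  exact h a.2 (by
    have : a = (z, a.2) := by
      rw [← haz]
    rwa [this] at ha)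

theorem multiset_le_erase {α : Type*} [DecidableEq α] {a : α} {s t : Multiset α}
    (h : a ::ₘ s ≤ t) : s ≤ t.erase a := by
  rw [Multiset.le_iff_count] at h ⊢
  intro b
  have hb := h b
  by_cases hba : b = a
  · subst hba
    rw [Multiset.count_erase_self]
    rw [Multiset.count_cons_self] at hb
    omega
  · rw [Multiset.count_erase_of_ne hba]
    rw [Multiset.count_cons_of_ne hba] at hb
    exact hb

theorem isFmls_labT_cons (v : Label) {Y : NSeq} {M : Multiset Formula}
    (h : IsFmls Y M) (F : Formula) :
    LabT v ((NSeq.fml F).comma Y) ⟨{v}, ∅, fun z => if z = v then F ::ₘ M else 0⟩ := by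
  obtain ⟨W, hW, hl⟩ := isFmls_labT h v
  have hcm := LabT.comma (LabT.fml v F) hl (fun z hz => (Finset.mem_inter.1 hz).1)
  have hg : (LGraph.union ⟨{v}, ∅, fun z => if z = v then ({F} : Multiset Formula) else 0⟩
      ⟨W, ∅, fun z => if z = v then M else 0⟩) =
      ⟨{v}, ∅, fun z => if z = v then F ::ₘ M else 0⟩ := by
    refine LGraph.ext' ?_ (by simp [LGraph.union]) (funext fun z => ?_)
    · show {v} ∪ W = {v}
      ext w; simp; intro hw; simpa using hW hw
    · show (if z = v then {F} else 0) + (if z = v then M else 0) = _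
      by_cases hz : z = v <;> simp [hz, Multiset.singleton_add]
  rwa [hg] at hcm


theorem g3kt_main {R : RelSet} {Γ : Multiset (Label × Formula)} (D : G3KtD NoExt R Γ) :
    ∀ G : LGraph, G.V = (toLGraph R Γ).V → G.E = R →
      (∀ z, (toLGraph R Γ).L z ≤ G.L z) →
      ∀ (r : Label) (X : NSeq), LabT r X G → DKT NoNest X := by
  induction D with
  | id R Γ x p =>
      intro G hV hE hL r X hX
      have hp : Formula.pos p ∈ G.L x :=
        Multiset.mem_of_le (hL x) (by rw [toLGraph_L_cons]; simp)
      have hq : Formula.neg p ∈ G.L x :=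
        Multiset.mem_of_le (hL x) (by rw [toLGraph_L_cons, toLGraph_L_cons]; simp)
      obtain ⟨C, Y, he, hf, ht, hins⟩ := labT_at hX x
      obtain ⟨Y₁, heY₁, hfY₁⟩ := isFmls_extract hf hp
      have hq' : Formula.neg p ∈ (G.L x).erase (Formula.pos p) :=
        Multiset.mem_erase_of_ne (fun h => Formula.noConfusion h) |>.2 hq
      obtain ⟨Y₂, heY₂, hfY₂⟩ := isFmls_extract hfY₁ hq'
      have hd := DKT.id (Ext := NoNest) (C.comp (Ctx.commaL Ctx.hole Y₂)) p
      rw [Ctx.comp_fill] at hd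
      refine DKT.equiv hd (NEquiv.symm ?_)
      calc X =~ C.fill Y := he
        _ =~ C.fill ((NSeq.fml (Formula.pos p)).comma Y₁) := fill_congr C heY₁
        _ =~ C.fill ((NSeq.fml (Formula.pos p)).comma ((NSeq.fml (Formula.neg p)).comma Y₂)) :=
            fill_congr C (NEquiv.eR _ heY₂)
        _ =~ C.fill (((NSeq.fml (Formula.pos p)).comma (NSeq.fml (Formula.neg p))).comma Y₂) :=
            fill_congr C (NEquiv.symm (NEquiv.assoc _ _ _))
  | orR R Γ x A B D ih =>
      intro G hV hE hL r X hX
      have hor : Formula.or A B ∈ G.L x :=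
        Multiset.mem_of_le (hL x) (by rw [toLGraph_L_cons]; simp)
      have hxV : x ∈ G.V := by
        by_contra hc; rw [labT_supp hX x hc] at hor; simp at hor
      obtain ⟨C, Y, he, hf, ht, hins⟩ := labT_at hX x
      obtain ⟨Y', heY, hfY⟩ := isFmls_extract hf hor
      have hfB : IsFmls ((NSeq.fml B).comma Y') (B ::ₘ (G.L x).erase (Formula.or A B)) := by
        have := IsFmls.comma (IsFmls.fml B) hfY
        rwa [Multiset.singleton_add] at this
      have hZ := isFmls_labT_cons x hfB A
      have step := hins _ _ hZ (by simp) (fun z hz => by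
          have := (Finset.mem_inter.1 hz).1
          simpa using this) hxV
      have hle : (toLGraph R Γ).L x ≤ (G.L x).erase (Formula.or A B) := by
        have := hL x
        rw [toLGraph_L_cons] at this
        simp at this
        exact multiset_le_erase this
      have hd : DKT NoNest (C.fill ((NSeq.fml A).comma ((NSeq.fml B).comma Y'))) := by
        refine ih _ ?_ ?_ ?_ r _ step
        · show G.V ∪ {x} = _
          rw [hV, toLGraph_V_cons, toLGraph_V_cons, toLGraph_V_cons]
          ext z; simp
        · show G.E ∪ ∅ = R
          simp [hE]
        · intro z
          show (toLGraph R ((x, A) ::ₘ (x, B) ::ₘ Γ)).L z ≤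
            (if z = x then 0 else G.L z) +
              (if z = x then A ::ₘ B ::ₘ (G.L x).erase (Formula.or A B) else 0)
          rw [toLGraph_L_cons, toLGraph_L_cons]
          by_cases hzx : x = z
          · subst hzx
            simpa using Multiset.cons_le_cons A (Multiset.cons_le_cons B hle)
          · have hzx' : ¬ z = x := fun h => hzx h.symm
            simp only [if_neg hzx, if_neg hzx', add_zero]
            have := hL z
            rwa [toLGraph_L_cons, if_neg hzx] at this
      have hd2 := DKT.orD (Ext := NoNest) (C := C) (Y := Y') (A := A) (B := B) hd
      exact DKT.equiv hd2 (NEquiv.symm (he.trans (fill_congr C heY)))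
  | andR R Γ x A B D1 D2 ih1 ih2 =>
      intro G hV hE hL r X hX
      have hand : Formula.and A B ∈ G.L x :=
        Multiset.mem_of_le (hL x) (by rw [toLGraph_L_cons]; simp)
      have hxV : x ∈ G.V := by
        by_contra hc; rw [labT_supp hX x hc] at hand; simp at hand
      obtain ⟨C, Y, he, hf, ht, hins⟩ := labT_at hX x
      obtain ⟨Y', heY, hfY⟩ := isFmls_extract hf hand
      have hle : (toLGraph R Γ).L x ≤ (G.L x).erase (Formula.and A B) := by
        have := hL x
        rw [toLGraph_L_cons] at this
        simp at this
        exact multiset_le_erase this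
      have hVeq : G.V ∪ {x} = insert x ((toLGraph R Γ).V) := by
        rw [hV, toLGraph_V_cons]
        ext z; simp
      have hLraw : ∀ (F : Formula) (z : Label),
          (toLGraph R ((x, F) ::ₘ Γ)).L z ≤
            (if z = x then 0 else G.L z) +
              (if z = x then F ::ₘ (G.L x).erase (Formula.and A B) else 0) := by
        intro F z
        rw [toLGraph_L_cons]
        by_cases hzx : x = z
        · subst hzx
          simpa using Multiset.cons_le_cons F hle
        · have hzx' : ¬ z = x := fun h => hzx h.symm
          simp only [if_neg hzx, if_neg hzx', add_zero]
          have := hL z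
          rwa [toLGraph_L_cons, if_neg hzx] at this
      have hdA : DKT NoNest (C.fill ((NSeq.fml A).comma Y')) := by
        have hZ := isFmls_labT_cons x hfY A
        have step := hins _ _ hZ (by simp) (fun z hz => by
            have := (Finset.mem_inter.1 hz).1
            simpa using this) hxV
        refine ih1 _ ?_ ?_ ?_ r _ step
        · show G.V ∪ {x} = _
          rw [hVeq, toLGraph_V_cons]
        · show G.E ∪ ∅ = R
          simp [hE]
        · exact hLraw A
      have hdB : DKT NoNest (C.fill ((NSeq.fml B).comma Y')) := by
        have hZ := isFmls_labT_cons x hfY B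
        have step := hins _ _ hZ (by simp) (fun z hz => by
            have := (Finset.mem_inter.1 hz).1
            simpa using this) hxV
        refine ih2 _ ?_ ?_ ?_ r _ step
        · show G.V ∪ {x} = _
          rw [hVeq, toLGraph_V_cons]
        · show G.E ∪ ∅ = R
          simp [hE]
        · exact hLraw B
      have hd2 := DKT.andD (Ext := NoNest) (C := C) (Y := Y') (A := A) (B := B) hdA hdB
      exact DKT.equiv hd2 (NEquiv.symm (he.trans (fill_congr C heY)))
  | boxR R Γ x y A hy D ih =>
      intro G hV hE hL r X hX
      have hbox : Formula.box A ∈ G.L x :=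
        Multiset.mem_of_le (hL x) (by rw [toLGraph_L_cons]; simp)
      have hxV : x ∈ G.V := by
        by_contra hc; rw [labT_supp hX x hc] at hbox; simp at hbox
      have hyV : y ∉ G.V := by
        intro hc
        rw [hV] at hc
        exact hy (mem_toLGraph_V.1 hc)
      have hxy : x ≠ y := fun e => hyV (e ▸ hxV)
      obtain ⟨C, Y, he, hf, ht, hins⟩ := labT_at hX x
      obtain ⟨Y', heY, hfY⟩ := isFmls_extract hf hbox
      have hZ1 := isFmls_labT_cons x hfY (Formula.box A)
      simp only [Multiset.cons_erase hbox] at hZ1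
      have hw : LabT x ((NSeq.fml A).white)
          ⟨insert x (insert y ({y} : Finset Label)), insert (x, y) (∅ : Finset (Label × Label)),
            fun z => if z = y then ({A} : Multiset Formula) else 0⟩ :=
        LabT.white (LabT.fml y A) (by simp [hxy]) hxy
      have hZ := LabT.comma hZ1 hw (fun z hz => by
        have := (Finset.mem_inter.1 hz).1; simpa using this)
      have step := hins _ _ hZ (by simp [LGraph.union])
        (by
          intro z hz
          rw [Finset.mem_inter] at hz
          obtain ⟨hz1, hz2⟩ := hz
          simp [LGraph.union] at hz1
          rcases hz1 with rfl | rfl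
          · simp
          · exact absurd hz2 hyV) hxV
      have hd : DKT NoNest (C.fill
          (((NSeq.fml (Formula.box A)).comma Y').comma ((NSeq.fml A).white))) := by
        refine ih _ ?_ ?_ ?_ r _ step
        · ext z
          simp [LGraph.union, LGraph.clearAt, hV, toLGraph, Finset.image_insert,
            Multiset.toFinset_cons, Finset.mem_union, Finset.mem_insert]
          tauto
        · ext p
          simp [LGraph.union, LGraph.clearAt, hE, Finset.mem_union, Finset.mem_insert]
        · intro z
          show _ ≤ (if z = x then 0 else G.L z) +
            ((if z = x then G.L x else 0) + (if z = y then ({A} : Multiset Formula) else 0))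
          rw [toLGraph_L_cons]
          by_cases hzy : z = y
          · have h1 : ¬ z = x := fun h => hxy (by rw [← h, hzy])
            rw [if_pos hzy.symm, if_neg h1, if_neg h1, if_pos hzy]
            have hGz : G.L z = 0 := by rw [hzy]; exact labT_supp hX y hyV
            rw [hGz, hzy]
            have hΓy : (toLGraph (insert (x, y) R) Γ).L y = 0 :=
              toLGraph_L_zero (fun A' hA' => hy (Or.inr ⟨A', Multiset.mem_cons_of_mem hA'⟩))
            rw [hΓy]
            simp
          · rw [if_neg (fun h : y = z => hzy h.symm), if_neg hzy]
            by_cases hzx : z = x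
            · rw [if_pos hzx, if_pos hzx, zero_add, add_zero]
              have h0 := hL x
              rw [toLGraph_L_cons, if_pos rfl] at h0
              have h2 := le_trans (Multiset.le_cons_self _ _) h0
              rw [hzx]
              exact h2
            · rw [if_neg hzx, if_neg hzx, zero_add, add_zero]
              have h0 := hL z
              rwa [toLGraph_L_cons, if_neg (fun h : x = z => hzx h.symm)] at h0
      have hpre : DKT NoNest ((C.comp (Ctx.commaL Ctx.hole Y')).fill
          ((NSeq.fml (Formula.box A)).comma (NSeq.fml A).white)) := by
        rw [Ctx.comp_fill]
        exact DKT.equiv hd (fill_congr C (NEquiv.pull _ _ _))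
      have hpost := DKT.boxD hpre
      rw [Ctx.comp_fill] at hpost
      refine DKT.equiv hpost (NEquiv.symm ?_)
      calc X =~ C.fill Y := he
        _ =~ C.fill ((NSeq.fml (Formula.box A)).comma Y') := fill_congr C heY
  | diaR R Γ x y A hmem D ih =>
      intro G hV hE hL r X hX
      have hdia : Formula.dia A ∈ G.L x :=
        Multiset.mem_of_le (hL x) (by rw [toLGraph_L_cons]; simp)
      have he : (x, y) ∈ G.E := by rw [hE]; exact hmem
      obtain ⟨C, S, hd⟩ := labT_diaDecomp hX he hdia
      have hyV₀ : y ∈ (toLGraph R Γ).V := mem_toLGraph_V.2 (Or.inl ⟨x, Or.inr hmem⟩)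
      have hVp : (G.addF y A).V =
          (toLGraph R ((y, A) ::ₘ (x, Formula.dia A) ::ₘ Γ)).V := by
        show G.V = _
        rw [toLGraph_V_cons, toLGraph_V_cons, hV, toLGraph_V_cons,
          Finset.insert_eq_self.2 (Finset.mem_insert_of_mem hyV₀)]
      have hLp : ∀ z, (toLGraph R ((y, A) ::ₘ (x, Formula.dia A) ::ₘ Γ)).L z ≤
          (G.addF y A).L z := by
        intro z
        show _ ≤ if z = y then A ::ₘ G.L z else G.L z
        rw [toLGraph_L_cons]
        by_cases hzy : z = y
        · rw [if_pos hzy.symm, if_pos hzy, hzy]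
          exact Multiset.cons_le_cons _ (hL y)
        · rw [if_neg (fun h : y = z => hzy h.symm), if_neg hzy]
          exact hL z
      rcases hd with ⟨heq, hins⟩ | ⟨heq, hins⟩
      · have hd1 : DKT NoNest (C.fill ((NSeq.fml (Formula.dia A)).comma
            (((NSeq.fml A).comma S).white))) :=
          ih _ hVp hE hLp r _ (hins A)
        have hd2 : DKT NoNest (C.fill (((S.comma (NSeq.fml A)).white).comma
            (NSeq.fml (Formula.dia A)))) :=
          DKT.equiv hd1 (fill_congr C ((NEquiv.comm _ _).trans
            (NEquiv.eL _ (NEquiv.whiteCongr (NEquiv.comm _ _)))))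
        have hd3 := DKT.dia1 (Ext := NoNest) (C := C) (Y := S) (A := A) hd2
        refine DKT.equiv hd3 (NEquiv.symm ?_)
        calc X =~ C.fill ((NSeq.fml (Formula.dia A)).comma S.white) := heq
          _ =~ C.fill (S.white.comma (NSeq.fml (Formula.dia A))) :=
            fill_congr C (NEquiv.comm _ _)
      · have hd1 : DKT NoNest (C.fill ((NSeq.fml A).comma
            (((NSeq.fml (Formula.dia A)).comma S).black))) :=
          ih _ hVp hE hLp r _ (hins A)
        have hd2 : DKT NoNest (C.fill (((S.comma (NSeq.fml (Formula.dia A))).black).comma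
            (NSeq.fml A))) :=
          DKT.equiv hd1 (fill_congr C ((NEquiv.comm _ _).trans
            (NEquiv.eL _ (NEquiv.blackCongr (NEquiv.comm _ _)))))
        have hd3 := DKT.dia2 (Ext := NoNest) (C := C) (Y := S) (A := A) hd2
        refine DKT.equiv hd3 (NEquiv.symm ?_)
        calc X =~ C.fill (((NSeq.fml (Formula.dia A)).comma S).black) := heq
          _ =~ C.fill ((S.comma (NSeq.fml (Formula.dia A))).black) :=
            fill_congr C (NEquiv.blackCongr (NEquiv.comm _ _))
  | bboxR R Γ x y A hy D ih =>
      intro G hV hE hL r X hX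
      have hbox : Formula.bbox A ∈ G.L x :=
        Multiset.mem_of_le (hL x) (by rw [toLGraph_L_cons]; simp)
      have hxV : x ∈ G.V := by
        by_contra hc; rw [labT_supp hX x hc] at hbox; simp at hbox
      have hyV : y ∉ G.V := by
        intro hc
        rw [hV] at hc
        exact hy (mem_toLGraph_V.1 hc)
      have hxy : x ≠ y := fun e => hyV (e ▸ hxV)
      obtain ⟨C, Y, he, hf, ht, hins⟩ := labT_at hX x
      obtain ⟨Y', heY, hfY⟩ := isFmls_extract hf hbox
      have hZ1 := isFmls_labT_cons x hfY (Formula.bbox A)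
      simp only [Multiset.cons_erase hbox] at hZ1
      have hw : LabT x ((NSeq.fml A).black)
          ⟨insert x (insert y ({y} : Finset Label)), insert (y, x) (∅ : Finset (Label × Label)),
            fun z => if z = y then ({A} : Multiset Formula) else 0⟩ :=
        LabT.black (LabT.fml y A) (by simp [hxy]) hxy
      have hZ := LabT.comma hZ1 hw (fun z hz => by
        have := (Finset.mem_inter.1 hz).1; simpa using this)
      have step := hins _ _ hZ (by simp [LGraph.union])
        (by
          intro z hz
          rw [Finset.mem_inter] at hz
          obtain ⟨hz1, hz2⟩ := hz
          simp [LGraph.union] at hz1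
          rcases hz1 with rfl | rfl
          · simp
          · exact absurd hz2 hyV) hxV
      have hd : DKT NoNest (C.fill
          (((NSeq.fml (Formula.bbox A)).comma Y').comma ((NSeq.fml A).black))) := by
        refine ih _ ?_ ?_ ?_ r _ step
        · ext z
          simp [LGraph.union, LGraph.clearAt, hV, toLGraph, Finset.image_insert,
            Multiset.toFinset_cons, Finset.mem_union, Finset.mem_insert]
        · ext p
          simp [LGraph.union, LGraph.clearAt, hE, Finset.mem_union, Finset.mem_insert]
        · intro z
          show _ ≤ (if z = x then 0 else G.L z) +
            ((if z = x then G.L x else 0) + (if z = y then ({A} : Multiset Formula) else 0))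
          rw [toLGraph_L_cons]
          by_cases hzy : z = y
          · have h1 : ¬ z = x := fun h => hxy (by rw [← h, hzy])
            rw [if_pos hzy.symm, if_neg h1, if_neg h1, if_pos hzy]
            have hGz : G.L z = 0 := by rw [hzy]; exact labT_supp hX y hyV
            rw [hGz, hzy]
            have hΓy : (toLGraph (insert (y, x) R) Γ).L y = 0 :=
              toLGraph_L_zero (fun A' hA' => hy (Or.inr ⟨A', Multiset.mem_cons_of_mem hA'⟩))
            rw [hΓy]
            simp
          · rw [if_neg (fun h : y = z => hzy h.symm), if_neg hzy]
            by_cases hzx : z = x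
            · rw [if_pos hzx, if_pos hzx, zero_add, add_zero]
              have h0 := hL x
              rw [toLGraph_L_cons, if_pos rfl] at h0
              have h2 := le_trans (Multiset.le_cons_self _ _) h0
              rw [hzx]
              exact h2
            · rw [if_neg hzx, if_neg hzx, zero_add, add_zero]
              have h0 := hL z
              rwa [toLGraph_L_cons, if_neg (fun h : x = z => hzx h.symm)] at h0
      have hpre : DKT NoNest ((C.comp (Ctx.commaL Ctx.hole Y')).fill
          ((NSeq.fml (Formula.bbox A)).comma (NSeq.fml A).black)) := by
        rw [Ctx.comp_fill]
        exact DKT.equiv hd (fill_congr C (NEquiv.pull _ _ _))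
      have hpost := DKT.bboxD hpre
      rw [Ctx.comp_fill] at hpost
      refine DKT.equiv hpost (NEquiv.symm ?_)
      calc X =~ C.fill Y := he
        _ =~ C.fill ((NSeq.fml (Formula.bbox A)).comma Y') := fill_congr C heY
  | bdiaR R Γ x y A hmem D ih =>
      intro G hV hE hL r X hX
      have hbd : Formula.bdia A ∈ G.L x :=
        Multiset.mem_of_le (hL x) (by rw [toLGraph_L_cons]; simp)
      have he : (y, x) ∈ G.E := by rw [hE]; exact hmem
      obtain ⟨C, S, hd⟩ := labT_bdiaDecomp hX he hbd
      have hyV₀ : y ∈ (toLGraph R Γ).V := mem_toLGraph_V.2 (Or.inl ⟨x, Or.inl hmem⟩)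
      have hVp : (G.addF y A).V =
          (toLGraph R ((y, A) ::ₘ (x, Formula.bdia A) ::ₘ Γ)).V := by
        show G.V = _
        rw [toLGraph_V_cons, toLGraph_V_cons, hV, toLGraph_V_cons,
          Finset.insert_eq_self.2 (Finset.mem_insert_of_mem hyV₀)]
      have hLp : ∀ z, (toLGraph R ((y, A) ::ₘ (x, Formula.bdia A) ::ₘ Γ)).L z ≤
          (G.addF y A).L z := by
        intro z
        show _ ≤ if z = y then A ::ₘ G.L z else G.L z
        rw [toLGraph_L_cons]
        by_cases hzy : z = y
        · rw [if_pos hzy.symm, if_pos hzy, hzy]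
          exact Multiset.cons_le_cons _ (hL y)
        · rw [if_neg (fun h : y = z => hzy h.symm), if_neg hzy]
          exact hL z
      rcases hd with ⟨heq, hins⟩ | ⟨heq, hins⟩
      · have hd1 : DKT NoNest (C.fill ((NSeq.fml A).comma
            (((NSeq.fml (Formula.bdia A)).comma S).white))) :=
          ih _ hVp hE hLp r _ (hins A)
        have hd2 : DKT NoNest (C.fill (((S.comma (NSeq.fml (Formula.bdia A))).white).comma
            (NSeq.fml A))) :=
          DKT.equiv hd1 (fill_congr C ((NEquiv.comm _ _).trans
            (NEquiv.eL _ (NEquiv.whiteCongr (NEquiv.comm _ _)))))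
        have hd3 := DKT.bdia2 (Ext := NoNest) (C := C) (Y := S) (A := A) hd2
        refine DKT.equiv hd3 (NEquiv.symm ?_)
        calc X =~ C.fill (((NSeq.fml (Formula.bdia A)).comma S).white) := heq
          _ =~ C.fill ((S.comma (NSeq.fml (Formula.bdia A))).white) :=
            fill_congr C (NEquiv.whiteCongr (NEquiv.comm _ _))
      · have hd1 : DKT NoNest (C.fill ((NSeq.fml (Formula.bdia A)).comma
            (((NSeq.fml A).comma S).black))) :=
          ih _ hVp hE hLp r _ (hins A)
        have hd2 : DKT NoNest (C.fill (((S.comma (NSeq.fml A)).black).comma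
            (NSeq.fml (Formula.bdia A)))) :=
          DKT.equiv hd1 (fill_congr C ((NEquiv.comm _ _).trans
            (NEquiv.eL _ (NEquiv.blackCongr (NEquiv.comm _ _)))))
        have hd3 := DKT.bdia1 (Ext := NoNest) (C := C) (Y := S) (A := A) hd2
        refine DKT.equiv hd3 (NEquiv.symm ?_)
        calc X =~ C.fill ((NSeq.fml (Formula.bdia A)).comma S.black) := heq
          _ =~ C.fill (S.black.comma (NSeq.fml (Formula.bdia A))) :=
            fill_congr C (NEquiv.comm _ _)
  | ext R' Γ' R Γ hext D ih =>
      exact absurd hext (fun h => h)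


end G3KtToDKT

/-- Lemma `G3KT_to_DKT`: if a labeled sequent `R, Γ` has a
    derivation in `G3Kt` consisting solely of labeled polytree sequents, then
    the nested sequent `𝔑(R, Γ)` is derivable in the deep nested calculus
    `DKT`. -/
theorem g3kt_polytree_to_dkt (R : RelSet) (Γ : Multiset (Label × Formula))
    (D : G3KtD NoExt R Γ) (hall : D.allSeq fun S => IsPolytreeSeq S.1 S.2)
    (x : Label) (X : NSeq) (hX : NTrans x (toLGraph R Γ) X) :
    DKT NoNest X :=
  g3kt_main D (toLGraph R Γ) rfl rfl (fun _ => le_refl _) x X hX
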